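/- arXiv:1205.1833 — 8 statements merged into one kernel-verified Lean document; each statement's English description precedes it below -/
import Mathlib

section
/- Let N ≥ 1 and ℓ₀ ≥ 1 be integers satisfying 2ℓ₀ ≥ N. Define the sequence (a_k)_{k≥0} in {0,1} by: a_k = 0 if and only if there exists an integer ℓ ≥ ℓ₀ with ℓ² ≤ k ≤ ℓ² + N − 1. For an integer k ≥ 1 set N(k) := #{ j ∈ {0,…,k−1} : a_j = 0 }, B(1) := 1, and for k ≥ 2 set B(k) := 1 + #{ j ∈ {0,…,k−2} : a_j ≠ a_{j+1} }. Then: for every k ∈ {1,…,ℓ₀²} one has N(k) = 0 and B(k) = 1; and for every k ≥ ℓ₀² + 1 one has B(k) ≤ 2(√k − ℓ₀) + 3 and N·(√k − ℓ₀) ≤ N(k) ≤ N·√k. -/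
/-!
Since `N ≤ 2ℓ + 1`, the block `[ℓ², ℓ² + N)` of zeros lies inside `[ℓ², (ℓ + 1)²)`. Hence for
`m = ⌊√k⌋ ≥ ℓ₀` the blocks `ℓ₀, …, m - 1` lie entirely below `k` and block `m` contributes
`min (k - m²) N`, so `N(k) = N (m - ℓ₀) + min (k - m²) N`; the bounds on `N(k)` follow from
`m ≤ √k < m + 1`. Every change of value happens at an end of a block `ℓ ∈ [ℓ₀, m]`, giving at
most `2 (m + 1 - ℓ₀)` changes.
-/

open Finset

lemma mul_sub_le_mul_sub_add_min {N ℓ₀ m s : ℝ} (hN₀ : 0 ≤ N) (hN : N ≤ 2 * ℓ₀)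
    (hℓ₀ : ℓ₀ ≤ m) (hms : m ≤ s) (hsm : s ≤ m + 1) :
    N * (s - ℓ₀) ≤ N * (m - ℓ₀) + min (s ^ 2 - m ^ 2) N := by
  -- `N ≤ 2m ≤ s + m`, so `N (s - m) ≤ (s + m) (s - m)`
  have : N * (s - m) ≤ min (s ^ 2 - m ^ 2) N := le_min (by nlinarith) (by nlinarith)
  linarith

def InSquareBlock (ℓ₀ N j : ℕ) : Prop :=
  ∃ ℓ, ℓ₀ ≤ ℓ ∧ ℓ ^ 2 ≤ j ∧ j < ℓ ^ 2 + N

namespace InSquareBlock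

variable {ℓ₀ N : ℕ}

lemma not_of_lt_sq {j : ℕ} (hj : j < ℓ₀ ^ 2) : ¬InSquareBlock ℓ₀ N j := by
  rintro ⟨ℓ, hℓ, hℓj, -⟩
  have := Nat.pow_le_pow_left hℓ 2
  omega

lemma iff_lt (hN : N ≤ 2 * ℓ₀ + 1) {m j : ℕ} (hm : ℓ₀ ≤ m) (hmj : m ^ 2 ≤ j)
    (hjm : j < (m + 1) ^ 2) : InSquareBlock ℓ₀ N j ↔ j < m ^ 2 + N := by
  refine ⟨fun ⟨ℓ, hℓ, hℓj, hjℓ⟩ => ?_, fun h => ⟨m, hm, hmj, h⟩⟩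
  have hℓm : ℓ < m + 1 := (Nat.pow_lt_pow_iff_left two_ne_zero).1 (hℓj.trans_lt hjm)
  rcases (Nat.le_of_lt_succ hℓm).lt_or_eq with hlt | rfl
  · have : (ℓ + 1) ^ 2 ≤ m ^ 2 := Nat.pow_le_pow_left hlt 2
    nlinarith
  · exact hjℓ

lemma exists_sq_eq_of_not_iff_succ {j : ℕ}
    (h : ¬(InSquareBlock ℓ₀ N j ↔ InSquareBlock ℓ₀ N (j + 1))) :
    ∃ ℓ, ℓ₀ ≤ ℓ ∧ ℓ ^ 2 ≤ j + 1 ∧ (j + 1 = ℓ ^ 2 ∨ j + 1 = ℓ ^ 2 + N) := by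
  by_cases hj : InSquareBlock ℓ₀ N j
  · obtain ⟨ℓ, hℓ, hℓj, hjℓ⟩ := hj
    have hexit : ¬(j + 1 < ℓ ^ 2 + N) := fun hlt =>
      h (iff_of_true ⟨ℓ, hℓ, hℓj, hjℓ⟩ ⟨ℓ, hℓ, by omega, hlt⟩)
    exact ⟨ℓ, hℓ, by omega, Or.inr (by omega)⟩
  · obtain ⟨ℓ, hℓ, hℓj, hjℓ⟩ := (not_iff.1 h).1 hj
    have hentry : ¬(ℓ ^ 2 ≤ j) := fun hle => hj ⟨ℓ, hℓ, hle, by omega⟩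
    exact ⟨ℓ, hℓ, hℓj, Or.inl (by omega)⟩

variable {p : ℕ → Prop} [DecidablePred p]

lemma count_sq_add (hp : ∀ j, p j ↔ InSquareBlock ℓ₀ N j) (hN : N ≤ 2 * ℓ₀ + 1) {m i : ℕ}
    (hm : ℓ₀ ≤ m) (hi : i ≤ 2 * m + 1) :
    Nat.count p (m ^ 2 + i) = Nat.count p (m ^ 2) + min i N := by
  have hsq : (m + 1) ^ 2 = m ^ 2 + 2 * m + 1 := by ring
  have hblock : {k ∈ range i | p (m ^ 2 + k)} = range (min i N) := by
    ext k
    simp only [mem_filter, mem_range, lt_min_iff]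
    refine and_congr_right fun hk => ?_
    rw [hp, iff_lt hN hm (by omega) (by omega)]
    omega
  rw [Nat.count_add, Nat.count_eq_card_filter_range _ i, hblock, card_range]

lemma count_sq (hp : ∀ j, p j ↔ InSquareBlock ℓ₀ N j) (hN : N ≤ 2 * ℓ₀ + 1) {m : ℕ}
    (hm : ℓ₀ ≤ m) : Nat.count p (m ^ 2) = N * (m - ℓ₀) := by
  induction m, hm using Nat.le_induction with
  | base =>
    rw [Nat.sub_self, mul_zero]
    exact Nat.count_of_forall_not fun j hj hpj => not_of_lt_sq hj ((hp j).1 hpj)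
  | succ m hm ih =>
    rw [show (m + 1) ^ 2 = m ^ 2 + (2 * m + 1) by ring, count_sq_add hp hN hm le_rfl, ih,
      min_eq_right (by omega), Nat.sub_add_comm hm, mul_add_one]

lemma count_eq (hp : ∀ j, p j ↔ InSquareBlock ℓ₀ N j) (hN : N ≤ 2 * ℓ₀ + 1) {k : ℕ}
    (hk : ℓ₀ ≤ Nat.sqrt k) :
    Nat.count p k = N * (Nat.sqrt k - ℓ₀) + min (k - Nat.sqrt k ^ 2) N := by
  have hle := Nat.sqrt_le' k
  have hlt : k < (Nat.sqrt k + 1) ^ 2 := Nat.lt_succ_sqrt' k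
  have hsq : (Nat.sqrt k + 1) ^ 2 = Nat.sqrt k ^ 2 + 2 * Nat.sqrt k + 1 := by ring
  conv_lhs => rw [← Nat.add_sub_of_le hle]
  rw [count_sq_add hp hN hk (by omega), count_sq hp hN hk]

lemma card_filter_not_iff_succ_le (hp : ∀ j, p j ↔ InSquareBlock ℓ₀ N j) (n : ℕ) :
    #{j ∈ range n | ¬(p j ↔ p (j + 1))} ≤ 2 * (Nat.sqrt n + 1 - ℓ₀) := by
  have hsub : {j ∈ range n | ¬(p j ↔ p (j + 1))} ⊆
      (Icc ℓ₀ (Nat.sqrt n)).biUnion fun ℓ => {ℓ ^ 2 - 1, ℓ ^ 2 + N - 1} := by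
    intro j hj
    simp only [mem_filter, mem_range, hp] at hj
    obtain ⟨ℓ, hℓ, hℓj, hjℓ⟩ := exists_sq_eq_of_not_iff_succ hj.2
    simp only [mem_biUnion, mem_Icc, mem_insert, mem_singleton]
    exact ⟨ℓ, ⟨hℓ, Nat.le_sqrt'.2 (by omega)⟩, by omega⟩
  calc #{j ∈ range n | ¬(p j ↔ p (j + 1))}
      _ ≤ #((Icc ℓ₀ (Nat.sqrt n)).biUnion fun ℓ => {ℓ ^ 2 - 1, ℓ ^ 2 + N - 1}) :=
        card_le_card hsub
      _ ≤ #(Icc ℓ₀ (Nat.sqrt n)) * 2 := card_biUnion_le_card_mul _ _ _ fun _ _ => card_le_two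
      _ = 2 * (Nat.sqrt n + 1 - ℓ₀) := by rw [Nat.card_Icc, mul_comm]

lemma count_bounds_sqrt (hp : ∀ j, p j ↔ InSquareBlock ℓ₀ N j) (hN : N ≤ 2 * ℓ₀)
    (hℓ₀ : 1 ≤ ℓ₀) {k : ℕ} (hk : ℓ₀ ≤ Nat.sqrt k) :
    (N : ℝ) * (√k - ℓ₀) ≤ Nat.count p k ∧ (Nat.count p k : ℝ) ≤ N * √k := by
  have hms : (Nat.sqrt k : ℝ) ≤ √k := Real.nat_sqrt_le_real_sqrt
  have hsm : √k < Nat.sqrt k + 1 := Real.real_sqrt_lt_nat_sqrt_succ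
  have hℓ₀m : (ℓ₀ : ℝ) ≤ Nat.sqrt k := by exact_mod_cast hk
  have hcount : (Nat.count p k : ℝ) =
      N * ((Nat.sqrt k : ℝ) - ℓ₀) + min (√k ^ 2 - (Nat.sqrt k : ℝ) ^ 2) N := by
    rw [count_eq hp (by omega) hk, Real.sq_sqrt (Nat.cast_nonneg k)]
    push_cast [Nat.cast_sub hk, Nat.cast_sub (Nat.sqrt_le' k)]
    rfl
  rw [hcount]
  constructor
  · exact mul_sub_le_mul_sub_add_min (Nat.cast_nonneg N) (by exact_mod_cast hN) hℓ₀m hms hsm.le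
  · have hℓ₀R : (1 : ℝ) ≤ ℓ₀ := by exact_mod_cast hℓ₀
    calc _ ≤ N * ((Nat.sqrt k : ℝ) - ℓ₀) + N := by gcongr; exact min_le_right _ _
      _ ≤ N * (Nat.sqrt k : ℝ) := by nlinarith [(Nat.cast_nonneg N : (0 : ℝ) ≤ N)]
      _ ≤ N * √k := by gcongr

lemma card_filter_not_iff_succ_le_sqrt (hp : ∀ j, p j ↔ InSquareBlock ℓ₀ N j) {k : ℕ}
    (hk : ℓ₀ ≤ Nat.sqrt k) :
    (#{j ∈ range (k - 1) | ¬(p j ↔ p (j + 1))} : ℝ) ≤ 2 * (√k - ℓ₀) + 2 := by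
  have hcard := card_filter_not_iff_succ_le hp (k - 1)
  have hsqrt : Nat.sqrt (k - 1) ≤ Nat.sqrt k := Nat.sqrt_le_sqrt (Nat.sub_le k 1)
  calc (#{j ∈ range (k - 1) | ¬(p j ↔ p (j + 1))} : ℝ)
      _ ≤ ((2 * (Nat.sqrt k - ℓ₀) + 2 : ℕ) : ℝ) := by exact_mod_cast (by omega)
      _ = 2 * ((Nat.sqrt k : ℝ) - ℓ₀) + 2 := by push_cast [Nat.cast_sub hk]; ring
      _ ≤ 2 * (√k - ℓ₀) + 2 := by linarith [Real.nat_sqrt_le_real_sqrt (a := k)]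

end InSquareBlock

theorem stmt_0 (N ℓ₀ : ℕ) (hN : 1 ≤ N) (hℓ₀ : 1 ≤ ℓ₀) (hNℓ₀ : N ≤ 2 * ℓ₀)
    (a : ℕ → ℕ) (ha01 : ∀ k, a k = 0 ∨ a k = 1)
    (ha : ∀ k, a k = 0 ↔ ∃ ℓ : ℕ, ℓ₀ ≤ ℓ ∧ ℓ ^ 2 ≤ k ∧ k ≤ ℓ ^ 2 + N - 1)
    (Nfun : ℕ → ℕ) (hNfun : ∀ k, Nfun k = ((Finset.range k).filter (fun j => a j = 0)).card)
    (Bfun : ℕ → ℕ) (hB1 : Bfun 1 = 1)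
    (hBfun : ∀ k, 2 ≤ k →
      Bfun k = 1 + ((Finset.range (k - 1)).filter (fun j => a j ≠ a (j + 1))).card) :
    (∀ k : ℕ, 1 ≤ k → k ≤ ℓ₀ ^ 2 → Nfun k = 0 ∧ Bfun k = 1) ∧
    (∀ k : ℕ, ℓ₀ ^ 2 + 1 ≤ k →
      (Bfun k : ℝ) ≤ 2 * (Real.sqrt k - ℓ₀) + 3 ∧
      (N : ℝ) * (Real.sqrt k - ℓ₀) ≤ (Nfun k : ℝ) ∧
      (Nfun k : ℝ) ≤ (N : ℝ) * Real.sqrt k) := by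
  -- `N ≥ 1`, so the truncated `ℓ ^ 2 + N - 1` is the last point of the block
  have hp : ∀ j, a j = 0 ↔ InSquareBlock ℓ₀ N j := fun j =>
    (ha j).trans <| exists_congr fun ℓ => and_congr_right' <| and_congr_right' <| by omega
  have hNcount : ∀ k, Nfun k = Nat.count (fun j => a j = 0) k := fun k =>
    (hNfun k).trans (Nat.count_eq_card_filter_range _ k).symm
  have hBcount : ∀ k, 2 ≤ k →
      Bfun k = 1 + #{j ∈ range (k - 1) | ¬(a j = 0 ↔ a (j + 1) = 0)} := fun k hk => by
    rw [hBfun k hk]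
    congr 2
    refine filter_congr fun j _ => ?_
    rcases ha01 j with h | h <;> rcases ha01 (j + 1) with h' | h' <;> simp [h, h']
  refine ⟨fun k hk₁ hk => ⟨?_, ?_⟩, fun k hk => ?_⟩
  · rw [hNcount]
    exact Nat.count_of_forall_not fun j hj h =>
      InSquareBlock.not_of_lt_sq (by omega) ((hp j).1 h)
  · obtain rfl | hk₂ := hk₁.eq_or_lt
    · exact hB1
    have hcard := InSquareBlock.card_filter_not_iff_succ_le hp (k - 1)
    have hsqrt : Nat.sqrt (k - 1) < ℓ₀ := Nat.sqrt_lt'.2 (by omega)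
    rw [hBcount k hk₂]
    omega
  · have hsqrt : ℓ₀ ≤ Nat.sqrt k := Nat.le_sqrt'.2 (by omega)
    have hk₂ : 2 ≤ k := by nlinarith
    rw [hNcount, hBcount k hk₂]
    push_cast
    exact ⟨by linarith [InSquareBlock.card_filter_not_iff_succ_le_sqrt hp hsqrt],
      InSquareBlock.count_bounds_sqrt hp hNℓ₀ hℓ₀ hsqrt⟩
end

section
/- For every integer n ≥ 3, the set 𝒦_n is contained in the open interval (−2, −3/4). -/
/-- The quadratic map `f_c(x) = x² + c`. -/
def fc (c : ℝ) : ℝ → ℝ := fun x => x ^ 2 + c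

/-- The set `𝒦_n` of real parameters. -/
def Kset (n : ℕ) : Set ℝ :=
  {c : ℝ | c < 0 ∧ (∀ j : ℕ, 1 ≤ j → j ≤ n - 1 → 0 < (fc c)^[j] c) ∧
    ∀ k : ℕ, (fc c)^[n + 3 * k + 1] c < 0 ∧ 0 < (fc c)^[n + 3 * k + 2] c}

theorem stmt_1 (n : ℕ) (hn : 3 ≤ n) : Kset n ⊆ Set.Ioo (-2 : ℝ) (-3 / 4) := by
  intro c hc
  obtain ⟨h0, h1, h2⟩ := hc
  have hfc : 0 < c ^ 2 + c := by
    have := h1 1 le_rfl (by omega)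
    simpa [fc] using this
  constructor
  · by_contra h
    push_neg at h
    have key : ∀ j : ℕ, -c ≤ (fc c)^[j + 1] c := by
      intro j
      induction j with
      | zero =>
        simp only [zero_add, Function.iterate_one, fc]
        nlinarith
      | succ k ih =>
        rw [Function.iterate_succ_apply']
        simp only [fc]
        nlinarith [ih]
    have hneg := (h2 0).1
    have hpos := key n
    have heq : n + 3 * 0 + 1 = n + 1 := by ring
    rw [heq] at hneg
    linarith
  · nlinarith
end

section
/- For every integer n ≥ 3, the set 𝒦_n is a compact subset of ℝ. -/
open Set

/-- `c ≤ -1` replaces `c < 0` because the relaxed condition `c ≤ 0` would admit `c = 0`. -/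
def KsetWeak (n : ℕ) : Set ℝ :=
  {c : ℝ | c ≤ -1 ∧ (∀ j : ℕ, 1 ≤ j → j ≤ n - 1 → 0 ≤ (fc c)^[j] c) ∧
    ∀ k : ℕ, (fc c)^[n + 3 * k + 1] c ≤ 0 ∧ 0 ≤ (fc c)^[n + 3 * k + 2] c}

lemma iterate_fc_succ (c x : ℝ) (m : ℕ) :
    (fc c)^[m + 1] x = ((fc c)^[m] x) ^ 2 + c :=
  Function.iterate_succ_apply' _ _ _

lemma iterate_fc_succ_of_eq_zero {c x : ℝ} {m : ℕ} (h : (fc c)^[m] x = 0) :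
    (fc c)^[m + 1] x = c := by
  rw [iterate_fc_succ, h]; ring

lemma iterate_fc_add_two_of_eq_zero {c x : ℝ} {m : ℕ} (h : (fc c)^[m] x = 0) :
    (fc c)^[m + 2] x = c ^ 2 + c := by
  rw [iterate_fc_succ, iterate_fc_succ_of_eq_zero h]

lemma Continuous.iterate_fc {g : ℝ → ℝ} (hg : Continuous g) (m : ℕ) :
    Continuous fun c => (fc c)^[m] (g c) := by
  induction m with
  | zero => exact hg
  | succ m ih =>
    simp only [iterate_fc_succ]
    exact (ih.pow 2).add continuous_id

lemma mapsTo_fc_Ici {c : ℝ} (hc : c < -2) : MapsTo (fc c) (Ici (-c)) (Ici (-c)) := by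
  intro x (hx : -c ≤ x)
  show -c ≤ x ^ 2 + c
  nlinarith

lemma neg_le_iterate_fc_succ_self {c : ℝ} (hc : c < -2) (m : ℕ) : -c ≤ (fc c)^[m + 1] c := by
  rw [Function.iterate_succ_apply]
  refine ((mapsTo_fc_Ici hc).iterate m) ?_
  show -c ≤ c ^ 2 + c
  nlinarith

lemma isClosed_KsetWeak (n : ℕ) : IsClosed (KsetWeak n) := by
  have hcont := fun m => continuous_id.iterate_fc m
  simp only [KsetWeak, ofPred_and, ofPred_forall]
  refine (isClosed_le continuous_id continuous_const).inter (IsClosed.inter ?_ ?_)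
  · exact isClosed_iInter fun j => isClosed_iInter fun _ => isClosed_iInter fun _ =>
      isClosed_le continuous_const (hcont j)
  · exact isClosed_iInter fun k =>
      (isClosed_le (hcont _) continuous_const).inter (isClosed_le continuous_const (hcont _))

lemma KsetWeak_subset_Icc (n : ℕ) : KsetWeak n ⊆ Icc (-2) (-1) := by
  rintro c ⟨hc, -, hsign⟩
  refine ⟨not_lt.mp fun hc2 => ?_, hc⟩
  have := neg_le_iterate_fc_succ_self hc2 n
  linarith [(hsign 0).1]

lemma Kset_subset_KsetWeak {n : ℕ} (hn : 2 ≤ n) : Kset n ⊆ KsetWeak n := by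
  rintro c ⟨hc, hpos, hsign⟩
  have h1 : 0 < c ^ 2 + c := by simpa [fc] using hpos 1 le_rfl (by omega)
  exact ⟨by nlinarith, fun j hj hjn => (hpos j hj hjn).le,
    fun k => ⟨(hsign k).1.le, (hsign k).2.le⟩⟩

lemma KsetWeak_subset_Kset {n : ℕ} (hn : 3 ≤ n) : KsetWeak n ⊆ Kset n := by
  rintro c ⟨hc, hpos, hsign⟩
  have hc1 : c < -1 := by
    refine hc.lt_of_ne fun hc1 => ?_
    have h1 : (fc c)^[1] c = 0 := by simp [fc, hc1]
    have := hpos 2 (by omega) (by omega)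
    rw [iterate_fc_succ_of_eq_zero h1] at this
    linarith
  have hc2 : 0 < c ^ 2 + c := by nlinarith
  refine ⟨by linarith, fun j hj hjn => (hpos j hj hjn).lt_of_ne' fun h => ?_, fun k =>
    ⟨(hsign k).1.lt_of_ne fun h => ?_, (hsign k).2.lt_of_ne' fun h => ?_⟩⟩
  · rcases (show j + 1 ≤ n - 1 ∨ j + 1 = n by omega) with hj' | rfl
    · have := hpos (j + 1) (by omega) hj'
      rw [iterate_fc_succ_of_eq_zero h] at this
      linarith
    · have := (hsign 0).1
      rw [show j + 1 + 3 * 0 + 1 = j + 2 by ring, iterate_fc_add_two_of_eq_zero h] at this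
      linarith
  · have := (hsign k).2
    rw [iterate_fc_succ_of_eq_zero h] at this
    linarith
  · have := (hsign (k + 1)).1
    rw [show n + 3 * (k + 1) + 1 = n + 3 * k + 2 + 2 by ring,
      iterate_fc_add_two_of_eq_zero h] at this
    linarith

theorem stmt_2 (n : ℕ) (hn : 3 ≤ n) : IsCompact (Kset n) := by
  rw [(Kset_subset_KsetWeak (by omega)).antisymm (KsetWeak_subset_Kset hn)]
  exact isCompact_Icc.of_isClosed_subset (isClosed_KsetWeak n) (KsetWeak_subset_Icc n)
end

section
/- For every integer n ≥ 3 and every sequence x = (x_k)_{k≥0} in {0,1}^ℕ, there exists a unique real parameter c such that c ∈ 𝒦_n and, for every integer k ≥ 0: f_c^{n+3k}(c) < 0 when x_k = 0, and f_c^{n+3k}(c) > 0 when x_k = 1. -/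
/-!
Existence is a nested-interval argument. Suppose that on a parameter interval `J`, with
`J ⊆ [-2, -1.905]`, the point `f_c^m(c)` sweeps `[-0.7, 0.7]`. On a subinterval it sweeps exactly
the strip `[-0.7, -0.165]` or `[0.165, 0.7]` prescribed by the next symbol, and then
`f_c^{m+1}(c) < 0 < f_c^{m+2}(c)`. Three steps send `±0.165` above `0.7` and `±0.7` below `-0.7`,
so `f_c^{m+3}(c)` again sweeps `[-0.7, 0.7]` on a smaller interval. The first interval comes
from the windows `[1.73, 2] → [1.09, 1.65] → [-0.7, 0.7]` of `f_c^{n-2}(c), f_c^{n-1}(c), f_c^n(c)`,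
and by compactness some parameter lies in all the intervals.

Uniqueness is expansion. Every `c ∈ 𝒦_n` lies in `[-2, -1.905]`, and its orbit satisfies explicit
bounds along each block `n + 3k, n + 3k + 1, n + 3k + 2`. For `c₁ < c₂` in `𝒦_n` with the same
itinerary, the difference `D_m` of the two orbits satisfies
`D_{m+1} = (f_{c₂}^m(c₂) + f_{c₁}^m(c₁)) D_m + (c₂ - c₁)`. By these bounds `|D|` grows along the
blocks without bound, but it is at most `4`.
-/

open Set

def critOrbit (c : ℝ) (m : ℕ) : ℝ := (fc c)^[m] c

@[simp] lemma critOrbit_zero (c : ℝ) : critOrbit c 0 = c := rfl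

lemma critOrbit_succ_eq_fc (c : ℝ) (m : ℕ) : critOrbit c (m + 1) = fc c (critOrbit c m) :=
  Function.iterate_succ_apply' (fc c) m c

lemma critOrbit_succ (c : ℝ) (m : ℕ) : critOrbit c (m + 1) = critOrbit c m ^ 2 + c :=
  critOrbit_succ_eq_fc c m

lemma critOrbit_add_three (c : ℝ) (m : ℕ) :
    critOrbit c (m + 3) = fc c (fc c (fc c (critOrbit c m))) := by
  simp only [critOrbit_succ_eq_fc]

lemma critOrbit_two (c : ℝ) : critOrbit c 2 = (c ^ 2 + c) ^ 2 + c := by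
  simp [critOrbit_succ]

lemma continuous_critOrbit (m : ℕ) : Continuous (critOrbit · m) := by
  induction m with
  | zero => exact continuous_id
  | succ m ih =>
    simp only [critOrbit_succ]
    exact (ih.pow 2).add continuous_id'

lemma critOrbit_succ_sub (c₁ c₂ : ℝ) (m : ℕ) :
    critOrbit c₂ (m + 1) - critOrbit c₁ (m + 1) =
      (critOrbit c₂ m + critOrbit c₁ m) * (critOrbit c₂ m - critOrbit c₁ m) + (c₂ - c₁) := by
  rw [critOrbit_succ, critOrbit_succ]; ring

section Covering

variable {φ : ℝ → ℝ} {p q A B : ℝ}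

lemma Icc_subset_image_Icc (hφ : ContinuousOn φ (Icc p q)) {a b : ℝ} (ha : a ∈ Icc p q)
    (hb : b ∈ Icc p q) (hA : φ a ≤ A) (hB : B ≤ φ b) : Icc A B ⊆ φ '' Icc p q :=
  (Icc_subset_Icc hA hB).trans <|
    (isPreconnected_Icc.image φ hφ).Icc_subset (mem_image_of_mem φ ha) (mem_image_of_mem φ hb)

/-- Take the last time `a'` in `[a, b]` at which `φ = A`, then the first time after `a'` at which
`φ = B`; in between `φ` stays in `[A, B]` by the intermediate value theorem. -/
lemma exists_Icc_image_eq_of_le {a b : ℝ} (hab : a ≤ b) (hφ : ContinuousOn φ (Icc a b))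
    (ha : φ a = A) (hb : φ b = B) (hAB : A ≤ B) :
    ∃ a' b', a ≤ a' ∧ b' ≤ b ∧ φ '' Icc a' b' = Icc A B := by
  set S := Icc a b ∩ φ ⁻¹' {A}
  have hS : IsClosed S := hφ.preimage_isClosed_of_isClosed isClosed_Icc isClosed_singleton
  have ha' : sSup S ∈ S :=
    hS.csSup_mem ⟨a, left_mem_Icc.2 hab, ha⟩ (bddAbove_Icc.mono inter_subset_left)
  set a' := sSup S
  have hφ' : ContinuousOn φ (Icc a' b) := hφ.mono (Icc_subset_Icc_left ha'.1.1)
  set T := Icc a' b ∩ φ ⁻¹' {B}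
  have hT : IsClosed T := hφ'.preimage_isClosed_of_isClosed isClosed_Icc isClosed_singleton
  have hb' : sInf T ∈ T :=
    hT.csInf_mem ⟨b, right_mem_Icc.2 ha'.1.2, hb⟩ (bddBelow_Icc.mono inter_subset_left)
  set b' := sInf T
  have hφA : φ a' = A := ha'.2
  have hφB : φ b' = B := hb'.2
  refine ⟨a', b', ha'.1.1, hb'.1.2, (image_subset_iff.2 fun t ht => ?_).antisymm
    (hφA ▸ hφB ▸ intermediate_value_Icc hb'.1.1 (hφ'.mono (Icc_subset_Icc_right hb'.1.2)))⟩
  have htb : t ≤ b := ht.2.trans hb'.1.2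
  by_contra hout
  rcases not_and_or.1 hout with hlt | hgt
  · obtain ⟨s, hs, hsA⟩ := intermediate_value_Icc htb (hφ'.mono (Icc_subset_Icc_left ht.1))
      ⟨(not_le.1 hlt).le, hb ▸ hAB⟩
    have : s ≤ a' := le_csSup (bddAbove_Icc.mono inter_subset_left)
      ⟨⟨ha'.1.1.trans (ht.1.trans hs.1), hs.2⟩, hsA⟩
    have hst : s = t := le_antisymm (this.trans ht.1) hs.1
    exact hlt (hst ▸ hsA.ge)
  · obtain ⟨s, hs, hsB⟩ := intermediate_value_Icc ht.1 (hφ'.mono (Icc_subset_Icc_right htb))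
      ⟨hφA ▸ hAB, (not_le.1 hgt).le⟩
    have : b' ≤ s := csInf_le (bddBelow_Icc.mono inter_subset_left)
      ⟨⟨hs.1, hs.2.trans htb⟩, hsB⟩
    have hst : s = t := le_antisymm hs.2 (ht.2.trans this)
    exact hgt (hst ▸ hsB.le)

lemma exists_Icc_subset_image_eq (hφ : ContinuousOn φ (Icc p q)) (hAB : A ≤ B)
    (hsub : Icc A B ⊆ φ '' Icc p q) :
    ∃ p' q', Icc p' q' ⊆ Icc p q ∧ φ '' Icc p' q' = Icc A B := by
  obtain ⟨a, ha, hφa⟩ := hsub (left_mem_Icc.2 hAB)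
  obtain ⟨b, hb, hφb⟩ := hsub (right_mem_Icc.2 hAB)
  rcases le_total a b with hab | hba
  · obtain ⟨a', b', haa', hb'b, himg⟩ :=
      exists_Icc_image_eq_of_le hab (hφ.mono (Icc_subset_Icc ha.1 hb.2)) hφa hφb hAB
    exact ⟨a', b', Icc_subset_Icc (ha.1.trans haa') (hb'b.trans hb.2), himg⟩
  · have hψ : ContinuousOn (φ ∘ Neg.neg) (Icc (-a) (-b)) :=
      (hφ.mono (Icc_subset_Icc hb.1 ha.2)).comp continuous_neg.continuousOn fun t ht =>
        ⟨le_neg.1 ht.2, neg_le.1 ht.1⟩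
    obtain ⟨a', b', haa', hb'b, himg⟩ := exists_Icc_image_eq_of_le (neg_le_neg hba) hψ
      (by simpa using hφa) (by simpa using hφb) hAB
    refine ⟨-b', -a', Icc_subset_Icc (hb.1.trans (le_neg.1 hb'b)) ((neg_le.1 haa').trans ha.2),
      ?_⟩
    rw [← image_neg_Icc, ← image_comp, himg]

end Covering

section Existence

variable {c w : ℝ}

lemma fc_neg_of_sq_le (hc : c ∈ Icc (-2) (-1.905)) (hw : w ^ 2 ≤ 0.7 ^ 2) : fc c w < 0 := by
  simp only [fc]; linarith [hc.2]

lemma fc_fc_pos_of_sq_le (hc : c ∈ Icc (-2) (-1.905)) (hw : w ^ 2 ≤ 0.7 ^ 2) :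
    0 < fc c (fc c w) := by
  obtain ⟨hc₁, hc₂⟩ := hc
  simp only [fc]
  nlinarith [sq_nonneg (w ^ 2 + c + 1.415)]

lemma fc_fc_fc_ge_of_sq_eq (hc : c ∈ Icc (-2) (-1.905)) (hw : w ^ 2 = 0.165 ^ 2) :
    0.7 ≤ fc c (fc c (fc c w)) := by
  obtain ⟨hc₁, hc₂⟩ := hc
  simp only [fc, hw]
  have hu : 1.62 ≤ (0.165 ^ 2 + c) ^ 2 + c := by nlinarith [sq_nonneg (c + 1.905)]
  nlinarith [sq_nonneg (c + 1.905), mul_nonneg (neg_nonneg.2 (by linarith : c + 1.905 ≤ 0))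
    (by linarith : (0:ℝ) ≤ c + 2), sq_nonneg ((0.165 ^ 2 + c) ^ 2 + c - 1.62)]

lemma fc_fc_fc_le_of_sq_eq (hc : c ∈ Icc (-2) (-1.905)) (hw : w ^ 2 = 0.7 ^ 2) :
    fc c (fc c (fc c w)) ≤ -0.7 := by
  obtain ⟨hc₁, hc₂⟩ := hc
  simp only [fc, hw]
  have hu₀ : 0 ≤ (0.7 ^ 2 + c) ^ 2 + c := by nlinarith
  have hu₁ : (0.7 ^ 2 + c) ^ 2 + c ≤ 0.2801 := by nlinarith
  nlinarith

lemma exists_Icc_image_critOrbit_succ {m : ℕ} {p q A B A' B' : ℝ}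
    (hpq : Icc p q ⊆ Icc (-2) (-1.907)) (himg : (critOrbit · m) '' Icc p q = Icc A B)
    (hAB : A ≤ B) (hA' : A ^ 2 - 1.907 ≤ A') (hB' : B' ≤ B ^ 2 - 2) (hAB' : A' ≤ B') :
    ∃ p' q', Icc p' q' ⊆ Icc p q ∧ (critOrbit · (m + 1)) '' Icc p' q' = Icc A' B' := by
  obtain ⟨a, ha, hHa⟩ := himg.symm ▸ left_mem_Icc.2 hAB
  obtain ⟨b, hb, hHb⟩ := himg.symm ▸ right_mem_Icc.2 hAB
  refine exists_Icc_subset_image_eq (continuous_critOrbit _).continuousOn hAB'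
    (Icc_subset_image_Icc (continuous_critOrbit _).continuousOn ha hb ?_ ?_)
  · simp only [critOrbit_succ, hHa]; linarith [(hpq ha).2]
  · simp only [critOrbit_succ, hHb]; linarith [(hpq hb).1]

def IsWindow (j : ℕ) (A B p q : ℝ) : Prop :=
  Icc p q ⊆ Icc (-2) (-1.907) ∧ (∀ c ∈ Icc p q, ∀ i, 1 ≤ i → i ≤ j → 0 < critOrbit c i) ∧
    (critOrbit · j) '' Icc p q = Icc A B

lemma IsWindow.exists_succ {j : ℕ} {A B A' B' p q : ℝ} (h : IsWindow j A B p q) (hAB : A ≤ B)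
    (hA' : 0 < A') (hA : A ^ 2 - 1.907 ≤ A') (hB : B' ≤ B ^ 2 - 2) (hAB' : A' ≤ B') :
    ∃ p' q', IsWindow (j + 1) A' B' p' q' := by
  obtain ⟨hsub, hpos, himg⟩ := h
  obtain ⟨p', q', hsub', himg'⟩ := exists_Icc_image_critOrbit_succ hsub himg hAB hA hB hAB'
  refine ⟨p', q', hsub'.trans hsub, fun c hc i hi₁ hi₂ => ?_, himg'⟩
  rcases Nat.lt_or_eq_of_le hi₂ with hi | rfl
  · exact hpos c (hsub' hc) i hi₁ (Nat.lt_succ_iff.1 hi)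
  · exact hA'.trans_le (himg' ▸ mem_image_of_mem _ hc : critOrbit c (j + 1) ∈ Icc A' B').1

lemma exists_isWindow_one : ∃ p q, IsWindow 1 1.73 2 p q := by
  have hsub : Icc (1.73 : ℝ) 2 ⊆ (critOrbit · 1) '' Icc (-2) (-1.907) :=
    Icc_subset_image_Icc (continuous_critOrbit 1).continuousOn (b := -2) (a := -1.907)
      (by norm_num) (by norm_num) (by norm_num [critOrbit_succ]) (by norm_num [critOrbit_succ])
  obtain ⟨p, q, hpq, himg⟩ :=
    exists_Icc_subset_image_eq (continuous_critOrbit 1).continuousOn (by norm_num) hsub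
  refine ⟨p, q, hpq, fun c hc i hi₁ hi₂ => ?_, himg⟩
  obtain rfl : i = 1 := le_antisymm hi₂ hi₁
  have := (himg ▸ mem_image_of_mem _ hc : critOrbit c 1 ∈ Icc (1.73 : ℝ) 2).1
  linarith

/-- `[1.73, 2]` covers itself: `1.73² - 1.907 ≤ 1.73` and `2² - 2 = 2`. -/
lemma exists_isWindow {j : ℕ} (hj : 1 ≤ j) : ∃ p q, IsWindow j 1.73 2 p q := by
  induction j, hj using Nat.le_induction with
  | base => exact exists_isWindow_one
  | succ j _ ih =>
    obtain ⟨p, q, h⟩ := ih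
    exact h.exists_succ (by norm_num) (by norm_num) (by norm_num) (by norm_num) (by norm_num)

lemma exists_Icc_image_critOrbit_eq {n : ℕ} (hn : 3 ≤ n) :
    ∃ p q, Icc p q ⊆ Icc (-2) (-1.905) ∧
      (∀ c ∈ Icc p q, ∀ j, 1 ≤ j → j ≤ n - 1 → 0 < critOrbit c j) ∧
      (critOrbit · n) '' Icc p q = Icc (-0.7) 0.7 := by
  obtain ⟨m, rfl⟩ := Nat.exists_eq_add_of_le' hn
  obtain ⟨p, q, h⟩ := exists_isWindow (j := m + 1) (by omega)
  obtain ⟨p', q', hsub, hpos, himg⟩ :=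
    h.exists_succ (A' := 1.09) (B' := 1.65) (by norm_num) (by norm_num) (by norm_num)
      (by norm_num) (by norm_num)
  obtain ⟨p'', q'', hsub', himg'⟩ := exists_Icc_image_critOrbit_succ (A' := -0.7) (B' := 0.7)
    hsub himg (by norm_num) (by norm_num) (by norm_num) (by norm_num)
  refine ⟨p'', q'', fun c hc => ?_, fun c hc j hj₁ hj₂ => hpos c (hsub' hc) j hj₁ (by omega),
    himg'⟩
  exact Icc_subset_Icc_right (by norm_num) (hsub (hsub' hc))

def signStrip : Fin 2 → Set ℝ
  | 0 => Icc (-0.7) (-0.165)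
  | 1 => Icc 0.165 0.7

lemma isClosed_signStrip (t : Fin 2) : IsClosed (signStrip t) := by
  fin_cases t <;> exact isClosed_Icc

lemma signStrip_subset (t : Fin 2) : signStrip t ⊆ Icc (-0.7) 0.7 := by
  fin_cases t <;> exact Icc_subset_Icc (by norm_num) (by norm_num)

lemma sign_of_mem_signStrip {t : Fin 2} {y : ℝ} (hy : y ∈ signStrip t) :
    (t = 0 → y < 0) ∧ (t = 1 → 0 < y) := by
  fin_cases t
  · exact ⟨fun _ => hy.2.trans_lt (by norm_num), by simp⟩
  · exact ⟨by simp, fun _ => lt_of_lt_of_le (by norm_num) hy.1⟩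

lemma exists_Icc_mapsTo_signStrip {m : ℕ} {p q : ℝ} (t : Fin 2)
    (hpq : Icc p q ⊆ Icc (-2) (-1.905)) (himg : (critOrbit · m) '' Icc p q = Icc (-0.7) 0.7) :
    ∃ p' q', Icc p' q' ⊆ Icc p q ∧ MapsTo (critOrbit · m) (Icc p' q') (signStrip t) ∧
      (critOrbit · (m + 3)) '' Icc p' q' = Icc (-0.7) 0.7 := by
  obtain ⟨A, B, hAB, hstrip, hsq⟩ : ∃ A B : ℝ, A ≤ B ∧ signStrip t = Icc A B ∧
      ((A ^ 2 = 0.165 ^ 2 ∧ B ^ 2 = 0.7 ^ 2) ∨ (A ^ 2 = 0.7 ^ 2 ∧ B ^ 2 = 0.165 ^ 2)) := by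
    fin_cases t
    · exact ⟨-0.7, -0.165, by norm_num, rfl, Or.inr (by norm_num)⟩
    · exact ⟨0.165, 0.7, by norm_num, rfl, Or.inl (by norm_num)⟩
  obtain ⟨p₁, q₁, hsub₁, himg₁⟩ := exists_Icc_subset_image_eq
    (continuous_critOrbit m).continuousOn hAB (by rw [himg, ← hstrip]; exact signStrip_subset t)
  obtain ⟨u, hu, hu₂, v, hv, hv₂⟩ : ∃ u ∈ Icc p₁ q₁, critOrbit u m ^ 2 = 0.165 ^ 2 ∧
      ∃ v ∈ Icc p₁ q₁, critOrbit v m ^ 2 = 0.7 ^ 2 := by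
    obtain ⟨a, ha, rfl⟩ := himg₁.symm ▸ left_mem_Icc.2 hAB
    obtain ⟨b, hb, rfl⟩ := himg₁.symm ▸ right_mem_Icc.2 hAB
    rcases hsq with ⟨hA, hB⟩ | ⟨hA, hB⟩
    exacts [⟨a, ha, hA, b, hb, hB⟩, ⟨b, hb, hB, a, ha, hA⟩]
  obtain ⟨p₂, q₂, hsub₂, himg₂⟩ := exists_Icc_subset_image_eq
    (continuous_critOrbit (m + 3)).continuousOn (by norm_num)
    (Icc_subset_image_Icc (A := -0.7) (B := 0.7) (continuous_critOrbit (m + 3)).continuousOn hv hu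
      (by rw [critOrbit_add_three]; exact fc_fc_fc_le_of_sq_eq (hpq (hsub₁ hv)) hv₂)
      (by rw [critOrbit_add_three]; exact fc_fc_fc_ge_of_sq_eq (hpq (hsub₁ hu)) hu₂))
  refine ⟨p₂, q₂, hsub₂.trans hsub₁, fun c hc => ?_, himg₂⟩
  rw [hstrip, ← himg₁]
  exact mem_image_of_mem _ (hsub₂ hc)

lemma exists_mem_Kset_critOrbit_mem_signStrip {n : ℕ} (hn : 3 ≤ n) (x : ℕ → Fin 2) :
    ∃ c ∈ Kset n, ∀ k, critOrbit c (n + 3 * k) ∈ signStrip (x k) := by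
  obtain ⟨p, q, hpq, hpos, himg⟩ := exists_Icc_image_critOrbit_eq hn
  set C : ℕ → Set ℝ := fun k =>
    Icc p q ∩ ⋂ i ∈ Iio k, (critOrbit · (n + 3 * i)) ⁻¹' signStrip (x i)
  have hC : ∀ k, IsClosed (C k) := fun k => isClosed_Icc.inter <| isClosed_biInter fun i _ =>
    (isClosed_signStrip (x i)).preimage (continuous_critOrbit _)
  have hwin : ∀ k, ∃ p' q', Icc p' q' ⊆ C k ∧
      (critOrbit · (n + 3 * k)) '' Icc p' q' = Icc (-0.7) 0.7 := by
    intro k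
    induction k with
    | zero => exact ⟨p, q, fun c hc => ⟨hc, by simp⟩, himg⟩
    | succ k ih =>
      obtain ⟨p', q', hsub, himg'⟩ := ih
      obtain ⟨p'', q'', hsub', hmaps, himg''⟩ :=
        exists_Icc_mapsTo_signStrip (x k) (fun c hc => hpq (hsub hc).1) himg'
      refine ⟨p'', q'', fun c hc => ⟨(hsub (hsub' hc)).1, mem_iInter₂.2 fun i hi => ?_⟩, himg''⟩
      rcases Nat.lt_succ_iff_lt_or_eq.1 hi with hi | rfl
      · exact mem_iInter₂.1 (hsub (hsub' hc)).2 i hi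
      · exact hmaps hc
  obtain ⟨c, hc⟩ := IsCompact.nonempty_iInter_of_sequence_nonempty_isCompact_isClosed C
    (fun k => inter_subset_inter_right _ (biInter_subset_biInter_left (Iio_subset_Iio k.le_succ)))
    (fun k => by
      obtain ⟨p', q', hsub, himg'⟩ := hwin k
      exact ((himg' ▸ nonempty_Icc.2 (by norm_num)) : (_ '' Icc p' q').Nonempty).of_image.mono hsub)
    (isCompact_Icc.of_isClosed_subset (hC 0) inter_subset_left) hC
  have hc' : ∀ k, c ∈ C k := mem_iInter.1 hc
  have hstrip (k : ℕ) : critOrbit c (n + 3 * k) ∈ signStrip (x k) :=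
    mem_iInter₂.1 (hc' (k + 1)).2 k k.lt_succ_self
  have hrange := hpq (hc' 0).1
  refine ⟨c, ⟨hrange.2.trans_lt (by norm_num), hpos c (hc' 0).1, fun k => ?_⟩, hstrip⟩
  have hsq := sq_le_sq' (signStrip_subset _ (hstrip k)).1 (signStrip_subset _ (hstrip k)).2
  show critOrbit c (n + 3 * k + 1) < 0 ∧ 0 < critOrbit c (n + 3 * k + 1 + 1)
  simp only [critOrbit_succ_eq_fc]
  exact ⟨fc_neg_of_sq_le hrange hsq, fc_fc_pos_of_sq_le hrange hsq⟩

end Existence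

section Bounds

variable {c : ℝ}

lemma lt_of_critOrbit_two_pos (hc : c ∈ Icc (-2) 0) (h : 0 < critOrbit c 2) : c < -1.754 := by
  obtain ⟨hc₁, hc₂⟩ := hc
  rw [critOrbit_two] at h
  by_contra! h'
  nlinarith [mul_nonneg (neg_nonneg.2 hc₂)
    (mul_nonneg (by linarith : (0:ℝ) ≤ c + 1.754) (sq_nonneg (c + 0.1226)))]

lemma critOrbit_three_le (hc : c ∈ Icc (-1.905) (-1.754)) (h : 0 ≤ critOrbit c 2) :
    critOrbit c 3 ≤ -0.76 := by
  obtain ⟨hc₁, hc₂⟩ := hc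
  rw [critOrbit_two] at h
  rw [critOrbit_succ, critOrbit_two]
  have hub : (c ^ 2 + c) ^ 2 + c ≤ 1.0673 := by
    nlinarith [mul_nonneg (by linarith : (0:ℝ) ≤ c + 1.905) (by linarith : (0:ℝ) ≤ -1.754 - c)]
  have : 1.0673 * ((c ^ 2 + c) ^ 2 + c) ≤ -c - 0.76 := by
    nlinarith [mul_nonneg (by linarith : (0:ℝ) ≤ c + 1.905) (by linarith : (0:ℝ) ≤ -1.754 - c)]
  nlinarith

lemma neg_sub_sqrt_neg_le (hc : c ∈ Icc (-1.905) (-1.754)) : -c - √(-c) ≤ 0.525 := by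
  have : -c - 0.525 ≤ √(-c) :=
    (Real.le_sqrt (by linarith [hc.2]) (by linarith [hc.2])).2 (by nlinarith [hc.1, hc.2])
  linarith

lemma sqrt_neg_mem_Icc (hc : c ∈ Icc (-2) (-1.905)) : √(-c) ∈ Icc 1.3802 1.41422 :=
  ⟨(Real.le_sqrt (by norm_num) (by linarith [hc.2])).2 (by nlinarith [hc.2]),
    (Real.sqrt_le_left (by norm_num)).2 (by nlinarith [hc.1])⟩

lemma neg_sub_sqrt_neg_le_sq (hc : c ∈ Icc (-2) (-1.905)) :
    -c - √(-c) ≤ (-c - 1.18) ^ 2 ∧ -c - √(-c) ≤ (((c + 0.027) ^ 2 + c) ^ 2 + c) ^ 2 := by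
  obtain ⟨hr₁, hr₂⟩ := sqrt_neg_mem_Icc hc
  have hr : √(-c) ^ 2 = -c := Real.sq_sqrt (by linarith [hc.2])
  have chord : 0.700115 - 0.357 * c ≤ √(-c) := by
    nlinarith [mul_nonneg (sub_nonneg.2 hr₁) (sub_nonneg.2 hr₂)]
  obtain ⟨hc₁, hc₂⟩ := hc
  refine ⟨by nlinarith, ?_⟩
  have hB : 1.62 ≤ (c + 0.027) ^ 2 + c := by nlinarith [sq_nonneg (c + 1.905)]
  nlinarith [sq_nonneg (c + 1.905), sq_nonneg (c + 2), sq_nonneg ((c + 0.027) ^ 2 + c - 1.6),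
    mul_nonneg (by linarith : (0:ℝ) ≤ -1.905 - c) (by linarith : (0:ℝ) ≤ c + 2)]

/-- Bounds on a positive orbit point `u` whose image starts a block (see `Kset.sq_critOrbit_lt`). -/
lemma mem_Icc_of_sq_add_le {u : ℝ} (hc : c ∈ Icc (-2) (-1.905)) (hu : 0 < u)
    (h : (u ^ 2 + c) ^ 2 ≤ -c - √(-c)) : 1.086 ≤ u ∧ u ≤ (c + 0.027) ^ 2 + c := by
  obtain ⟨h₁, h₂⟩ := neg_sub_sqrt_neg_le_sq hc
  obtain ⟨hc₁, hc₂⟩ := hc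
  constructor
  · nlinarith [(abs_le_of_sq_le_sq' (h.trans h₁) (by linarith)).1]
  · have hB : 1.62 ≤ (c + 0.027) ^ 2 + c := by nlinarith [sq_nonneg (c + 1.905)]
    have := (abs_le_of_sq_le_sq' (h.trans h₂) (by nlinarith)).2
    exact (sq_le_sq₀ hu.le (by linarith)).1 (by linarith)

lemma sqrt_neg_lt_abs {v : ℝ} (hc : c ≤ 0) (h : 0 < v ^ 2 + c) : √(-c) < |v| := by
  rw [← Real.sqrt_sq_eq_abs]
  exact Real.sqrt_lt_sqrt (by linarith) (by linarith)

end Bounds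

lemma abs_mul_sub_le_abs_mul_add (S D A Δ : ℝ) (hΔ : 0 ≤ Δ) :
    |S| * |D| - |A| * Δ ≤ |S * D + A * Δ| := by
  simpa only [abs_mul, abs_of_nonneg hΔ] using abs_sub_abs_le_abs_add (S * D) (A * Δ)

/-- Orbit differences evolve by `D ↦ S D + Δ`, `S` the sum of the two orbit points; the ranges
of `S₀, S₁, S₂` are those met along a block. -/
lemma abs_three_steps_ge {S₀ S₁ S₂ D Δ : ℝ} (hΔ : 0 ≤ Δ) (h₀ : 0.3286 ≤ |S₀|)
    (h₁ : S₁ ∈ Icc (-3.946) (-2.7604)) (h₂ : S₂ ∈ Icc 2.172 3.786) :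
    1.97 * |D| - 10.2 * Δ ≤ |S₂ * (S₁ * (S₀ * D + Δ) + Δ) + Δ| := by
  obtain ⟨h₁, h₁'⟩ := h₁
  obtain ⟨h₂, h₂'⟩ := h₂
  have hP : 1.97 ≤ |S₂ * S₁ * S₀| := by
    rw [abs_mul, abs_mul, abs_of_pos (by linarith : 0 < S₂), abs_of_neg (by linarith : S₁ < 0)]
    nlinarith [mul_le_mul_of_nonneg_left h₀ (by nlinarith : (0:ℝ) ≤ S₂ * -S₁)]
  have hA : |S₂ * S₁ + S₂ + 1| ≤ 10.2 := by
    have := mul_nonneg (by linarith : (0:ℝ) ≤ 3.786 - S₂) (by linarith : (0:ℝ) ≤ S₁ + 3.946)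
    have := mul_nonneg (by linarith : (0:ℝ) ≤ S₂ - 2.172) (by linarith : (0:ℝ) ≤ -2.7604 - S₁)
    exact abs_le.2 ⟨by nlinarith, by nlinarith⟩
  have key := abs_mul_sub_le_abs_mul_add (S₂ * S₁ * S₀) D (S₂ * S₁ + S₂ + 1) Δ hΔ
  rw [show S₂ * S₁ * S₀ * D + (S₂ * S₁ + S₂ + 1) * Δ = S₂ * (S₁ * (S₀ * D + Δ) + Δ) + Δ by ring]
    at key
  nlinarith [mul_le_mul_of_nonneg_right hP (abs_nonneg D), mul_le_mul_of_nonneg_right hA hΔ]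

lemma neg_le_critOrbit {c : ℝ} (hc : c < -2) {m : ℕ} (hm : 1 ≤ m) : -c ≤ critOrbit c m := by
  induction m, hm using Nat.le_induction with
  | base => rw [critOrbit_succ, critOrbit_zero]; nlinarith
  | succ m _ ih => rw [critOrbit_succ]; nlinarith

lemma abs_critOrbit_le {c : ℝ} (hc : c ∈ Icc (-2) 0) (m : ℕ) : |critOrbit c m| ≤ -c := by
  induction m with
  | zero => exact (abs_of_nonpos hc.2).le
  | succ m ih =>
    have := sq_le_sq' (abs_le.1 ih).1 (abs_le.1 ih).2
    rw [critOrbit_succ, abs_le]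
    constructor <;> nlinarith [hc.1, hc.2, sq_nonneg (critOrbit c m)]

namespace Kset

variable {n : ℕ} {c : ℝ}

lemma lt_zero (hc : c ∈ Kset n) : c < 0 := hc.1

lemma critOrbit_pos (hc : c ∈ Kset n) {j : ℕ} (hj₁ : 1 ≤ j) (hj₂ : j ≤ n - 1) :
    0 < critOrbit c j :=
  hc.2.1 j hj₁ hj₂

lemma critOrbit_add_one_neg (hc : c ∈ Kset n) (k : ℕ) : critOrbit c (n + 3 * k + 1) < 0 :=
  (hc.2.2 k).1

lemma critOrbit_add_two_pos (hc : c ∈ Kset n) (k : ℕ) : 0 < critOrbit c (n + 3 * k + 2) :=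
  (hc.2.2 k).2

lemma neg_two_le (hc : c ∈ Kset n) : -2 ≤ c := by
  by_contra! h
  have := neg_le_critOrbit h (m := n + 3 * 0 + 1) (by omega)
  linarith [critOrbit_add_one_neg hc 0, lt_zero hc]

lemma sq_critOrbit_lt (hc : c ∈ Kset n) (k : ℕ) :
    critOrbit c (n + 3 * k) ^ 2 < -c - √(-c) := by
  have hv := critOrbit_add_one_neg hc k
  have hu := critOrbit_add_two_pos hc k
  rw [critOrbit_succ] at hu
  have := sqrt_neg_lt_abs (lt_zero hc).le hu
  rw [abs_of_neg hv, critOrbit_succ] at this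
  rw [critOrbit_succ] at hv
  linarith

/-- Positivity of `f_c(c)` and `f_c^2(c)` already forces `c < -1.754`; on `[-1.905, -1.754]`
the third iterate is then below `-0.76`, too negative both to be positive and to start a
block. -/
lemma mem_Icc (hn : 3 ≤ n) (hc : c ∈ Kset n) : c ∈ Icc (-2) (-1.905) := by
  refine ⟨neg_two_le hc, ?_⟩
  by_contra! h
  have h₂ : 0 < critOrbit c 2 := critOrbit_pos hc (by norm_num) (by omega)
  have hc' : c ∈ Icc (-1.905) (-1.754) :=
    ⟨h.le, (lt_of_critOrbit_two_pos ⟨neg_two_le hc, (lt_zero hc).le⟩ h₂).le⟩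
  have h₃ := critOrbit_three_le hc' h₂.le
  rcases hn.eq_or_lt with rfl | hn
  · nlinarith [sq_critOrbit_lt hc 0, neg_sub_sqrt_neg_le hc']
  · linarith [critOrbit_pos hc (j := 3) (by norm_num) (by omega)]

lemma block_bounds (hn : 3 ≤ n) (hc : c ∈ Kset n) (k : ℕ) :
    0.027 ≤ critOrbit c (n + 3 * k) ^ 2 ∧ critOrbit c (n + 3 * k + 1) ∈ Icc (-1.973) (-1.3802) ∧
      critOrbit c (n + 3 * k + 2) ∈ Icc 1.086 1.893 := by
  have hcI := mem_Icc hn hc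
  have ⟨hc₁, hc₂⟩ := hcI
  have hnext := (sq_critOrbit_lt hc (k + 1)).le
  rw [show n + 3 * (k + 1) = n + 3 * k + 2 + 1 by ring, critOrbit_succ] at hnext
  obtain ⟨hu₁, hu₂⟩ := mem_Icc_of_sq_add_le hcI (critOrbit_add_two_pos hc k) hnext
  have hv := critOrbit_add_one_neg hc k
  have hu : 0 < critOrbit c (n + 3 * k + 1) ^ 2 + c := by
    rw [← critOrbit_succ]; exact critOrbit_add_two_pos hc k
  have hv₁ : c + 0.027 ≤ critOrbit c (n + 3 * k + 1) := by
    have : critOrbit c (n + 3 * k + 1) ^ 2 ≤ (-(c + 0.027)) ^ 2 := by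
      rw [critOrbit_succ] at hu₂; linarith [neg_sq (c + 0.027)]
    simpa using (abs_le_of_sq_le_sq' this (by linarith)).1
  have hv₂ := sqrt_neg_lt_abs (by linarith) hu
  rw [abs_of_neg hv] at hv₂
  have hw : critOrbit c (n + 3 * k) ^ 2 + c = critOrbit c (n + 3 * k + 1) :=
    (critOrbit_succ c _).symm
  refine ⟨by linarith, ⟨by linarith, by linarith [(sqrt_neg_mem_Icc hcI).1]⟩, hu₁, by nlinarith⟩

lemma sqrt_neg_lt_critOrbit (hc : c ∈ Kset n) {j : ℕ} (hj₁ : 1 ≤ j) (hj₂ : j + 1 ≤ n - 1) :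
    √(-c) < critOrbit c j := by
  have := sqrt_neg_lt_abs (lt_zero hc).le
    (critOrbit_succ c j ▸ critOrbit_pos hc (by omega) hj₂ : 0 < critOrbit c j ^ 2 + c)
  rwa [abs_of_pos (critOrbit_pos hc hj₁ (by omega))] at this

lemma critOrbit_ge (hn : 3 ≤ n) (hc : c ∈ Kset n) {j : ℕ} (hj₁ : 1 ≤ j) (hj₂ : j ≤ n - 2) :
    1.3802 ≤ critOrbit c j :=
  (sqrt_neg_mem_Icc (mem_Icc hn hc)).1.trans (sqrt_neg_lt_critOrbit hc hj₁ (by omega)).le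

lemma critOrbit_pred_ge (hn : 3 ≤ n) (hc : c ∈ Kset n) : 1.086 ≤ critOrbit c (n - 1) := by
  have h := (sq_critOrbit_lt hc 0).le
  rw [show n + 3 * 0 = n - 1 + 1 by omega, critOrbit_succ] at h
  exact (mem_Icc_of_sq_add_le (mem_Icc hn hc) (critOrbit_pos hc (by omega) le_rfl) h).1

variable {c₁ c₂ : ℝ}

lemma abs_sub_critOrbit_succ_ge (hle : c₁ ≤ c₂) (m : ℕ) :
    |critOrbit c₂ m + critOrbit c₁ m| * |critOrbit c₂ m - critOrbit c₁ m| - (c₂ - c₁) ≤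
      |critOrbit c₂ (m + 1) - critOrbit c₁ (m + 1)| := by
  simpa [critOrbit_succ_sub] using
    abs_mul_sub_le_abs_mul_add (critOrbit c₂ m + critOrbit c₁ m) (critOrbit c₂ m - critOrbit c₁ m)
      1 (c₂ - c₁) (sub_nonneg.2 hle)

lemma twelve_mul_le_abs_sub_critOrbit (hn : 3 ≤ n) (h₁ : c₁ ∈ Kset n) (h₂ : c₂ ∈ Kset n)
    (hle : c₁ ≤ c₂) : 12 * (c₂ - c₁) ≤ |critOrbit c₂ n - critOrbit c₁ n| := by
  have hΔ : 0 ≤ c₂ - c₁ := sub_nonneg.2 hle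
  have hc₁ := mem_Icc hn h₁
  have hc₂ := mem_Icc hn h₂
  have step := abs_sub_critOrbit_succ_ge hle
  have hD₁ : 2.81 * (c₂ - c₁) ≤ |critOrbit c₂ 1 - critOrbit c₁ 1| := by
    have := step 0
    rw [critOrbit_zero, critOrbit_zero, abs_of_neg (by linarith [hc₁.2, hc₂.2] : c₂ + c₁ < 0),
      abs_of_nonneg hΔ] at this
    nlinarith [hc₁.2, hc₂.2]
  have hstretch : ∀ m, 1 ≤ m → m ≤ n - 1 →
      2.81 * (c₂ - c₁) ≤ |critOrbit c₂ m - critOrbit c₁ m| := by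
    intro m hm
    induction m, hm using Nat.le_induction with
    | base => exact fun _ => hD₁
    | succ m hm ih =>
      intro hmn
      have hS : 2.7604 ≤ |critOrbit c₂ m + critOrbit c₁ m| := le_abs.2 <| Or.inl <| by
        linarith [critOrbit_ge hn h₁ hm (j := m) (by omega),
          critOrbit_ge hn h₂ hm (j := m) (by omega)]
      nlinarith [step m, ih (by omega), abs_nonneg (critOrbit c₂ m - critOrbit c₁ m)]
  have hpen : 6.75 * (c₂ - c₁) ≤ |critOrbit c₂ (n - 1) - critOrbit c₁ (n - 1)| := by
    have hS : 2.7604 ≤ |critOrbit c₂ (n - 2) + critOrbit c₁ (n - 2)| := le_abs.2 <| Or.inl <| by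
      linarith [critOrbit_ge hn h₁ (j := n - 2) (by omega) le_rfl,
        critOrbit_ge hn h₂ (j := n - 2) (by omega) le_rfl]
    have := step (n - 2)
    rw [show n - 2 + 1 = n - 1 by omega] at this
    nlinarith [hstretch (n - 2) (by omega) (by omega),
      abs_nonneg (critOrbit c₂ (n - 2) - critOrbit c₁ (n - 2))]
  have hS : 2.172 ≤ |critOrbit c₂ (n - 1) + critOrbit c₁ (n - 1)| := le_abs.2 <| Or.inl <| by
    linarith [critOrbit_pred_ge hn h₁, critOrbit_pred_ge hn h₂]
  have := step (n - 1)
  rw [show n - 1 + 1 = n by omega] at this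
  nlinarith [abs_nonneg (critOrbit c₂ (n - 1) - critOrbit c₁ (n - 1))]

lemma abs_sub_critOrbit_add_three_ge (hn : 3 ≤ n) (h₁ : c₁ ∈ Kset n) (h₂ : c₂ ∈ Kset n)
    (hle : c₁ ≤ c₂) {k : ℕ} (hsign : 0 < critOrbit c₁ (n + 3 * k) * critOrbit c₂ (n + 3 * k)) :
    1.97 * |critOrbit c₂ (n + 3 * k) - critOrbit c₁ (n + 3 * k)| - 10.2 * (c₂ - c₁) ≤
      |critOrbit c₂ (n + 3 * (k + 1)) - critOrbit c₁ (n + 3 * (k + 1))| := by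
  obtain ⟨hw₁, ⟨hv₁, hv₁'⟩, ⟨hu₁, hu₁'⟩⟩ := block_bounds hn h₁ k
  obtain ⟨hw₂, ⟨hv₂, hv₂'⟩, ⟨hu₂, hu₂'⟩⟩ := block_bounds hn h₂ k
  set m := n + 3 * k
  have habs : ∀ w : ℝ, 0.027 ≤ w ^ 2 → 0.1643 ≤ |w| := fun w hw => by
    nlinarith [sq_abs w, abs_nonneg w]
  have hS₀ : |critOrbit c₂ m + critOrbit c₁ m| = |critOrbit c₂ m| + |critOrbit c₁ m| := by
    refine (abs_add_eq_add_abs_iff _ _).2 ?_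
    rcases pos_and_pos_or_neg_and_neg_of_mul_pos hsign with ⟨h, h'⟩ | ⟨h, h'⟩
    exacts [Or.inl ⟨h'.le, h.le⟩, Or.inr ⟨h'.le, h.le⟩]
  rw [show n + 3 * (k + 1) = m + 1 + 1 + 1 by ring, critOrbit_succ_sub, critOrbit_succ_sub,
    critOrbit_succ_sub]
  exact abs_three_steps_ge (sub_nonneg.2 hle) (by linarith [habs _ hw₁, habs _ hw₂])
    ⟨by linarith, by linarith⟩ ⟨by linarith, by linarith⟩

lemma eq_of_mul_pos (hn : 3 ≤ n) (h₁ : c₁ ∈ Kset n) (h₂ : c₂ ∈ Kset n)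
    (hsign : ∀ k, 0 < critOrbit c₁ (n + 3 * k) * critOrbit c₂ (n + 3 * k)) : c₁ = c₂ := by
  wlog hle : c₁ ≤ c₂ generalizing c₁ c₂
  · exact (this h₂ h₁ (fun k => mul_comm (critOrbit c₁ _) _ ▸ hsign k) (le_of_not_ge hle)).symm
  by_contra hne
  have hΔ : 0 < c₂ - c₁ := sub_pos.2 (lt_of_le_of_ne hle hne)
  have hgrowth (k : ℕ) :
      (12 + k) * (c₂ - c₁) ≤ |critOrbit c₂ (n + 3 * k) - critOrbit c₁ (n + 3 * k)| := by
    induction k with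
    | zero => simpa using twelve_mul_le_abs_sub_critOrbit hn h₁ h₂ hle
    | succ k ih =>
      have := abs_sub_critOrbit_add_three_ge hn h₁ h₂ hle (hsign k)
      push_cast
      nlinarith
  have hbound (m : ℕ) : |critOrbit c₂ m - critOrbit c₁ m| ≤ 4 :=
    (abs_sub _ _).trans <| by
      linarith [abs_critOrbit_le ⟨neg_two_le h₂, (lt_zero h₂).le⟩ m,
        abs_critOrbit_le ⟨neg_two_le h₁, (lt_zero h₁).le⟩ m, neg_two_le h₁, neg_two_le h₂]
  obtain ⟨k, hk⟩ := exists_nat_gt (4 / (c₂ - c₁))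
  rw [div_lt_iff₀ hΔ] at hk
  nlinarith [hgrowth k, hbound (n + 3 * k)]

end Kset

lemma mul_pos_of_sign {t : Fin 2} {a b : ℝ} (ha : (t = 0 → a < 0) ∧ (t = 1 → 0 < a))
    (hb : (t = 0 → b < 0) ∧ (t = 1 → 0 < b)) : 0 < a * b := by
  fin_cases t
  · exact mul_pos_of_neg_of_neg (ha.1 rfl) (hb.1 rfl)
  · exact mul_pos (ha.2 rfl) (hb.2 rfl)

theorem stmt_3 (n : ℕ) (hn : 3 ≤ n) (x : ℕ → Fin 2) :
    ∃! c : ℝ, c ∈ Kset n ∧ ∀ k : ℕ,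
      (x k = 0 → (fc c)^[n + 3 * k] c < 0) ∧ (x k = 1 → 0 < (fc c)^[n + 3 * k] c) := by
  obtain ⟨c, hc, hstrip⟩ := exists_mem_Kset_critOrbit_mem_signStrip hn x
  have hsign (k : ℕ) := sign_of_mem_signStrip (hstrip k)
  exact ⟨c, ⟨hc, hsign⟩, fun c' ⟨hc', hsign'⟩ =>
    Kset.eq_of_mul_pos hn hc' hc fun k => mul_pos_of_sign (hsign' k) (hsign k)⟩
end

section
/- For every δ > 0 there exists an integer n₁ ≥ 3 such that for every integer n ≥ n₁ the set 𝒦_n is contained in the interval (−2, −2 + δ). -/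
/-- If `c ≤ -2`, the orbit of `c` stays above `-c` forever after the first step. -/
lemma escape (c : ℝ) (hc : c ≤ -2) : ∀ j : ℕ, 1 ≤ j → -c ≤ (fc c)^[j] c := by
  intro j hj
  induction j with
  | zero => omega
  | succ j ih =>
    rcases Nat.eq_or_lt_of_le hj with h | h
    · simp [← h, fc]
      nlinarith
    · have hj' : 1 ≤ j := by omega
      have hx := ih hj'
      rw [Function.iterate_succ_apply']
      show ((fc c)^[j] c) ^ 2 + c ≥ -c
      nlinarith

/-- One-step decrease estimate. -/
lemma step_dec (c x ε : ℝ) (hε : 0 < ε) (hε1 : ε ≤ 1) (hc1 : -2 + ε ≤ c)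
    (hc2 : c ≤ -1) (hx0 : 0 < x) (hx1 : x ≤ c ^ 2 + c) :
    x ^ 2 + c ≤ x - ε := by
  have hu : 0 < c ^ 2 + c := lt_of_lt_of_le hx0 hx1
  -- h1 : the decrement at x = c^2+c is at least ε
  have hc3 : (0:ℝ) ≤ -c^3 - 1 := by nlinarith [sq_nonneg (c + 1), sq_nonneg c]
  have hh1 : ε ≤ -c^3 * (c + 2) := by nlinarith [mul_nonneg hc3 (by linarith : (0:ℝ) ≤ c + 2)]
  have hh0 : ε ≤ -c := by linarith
  nlinarith [mul_nonneg (mul_nonneg hx0.le (by linarith : (0:ℝ) ≤ c ^ 2 + c - x)) hu.le,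
    mul_nonneg (by linarith : (0:ℝ) ≤ c ^ 2 + c - x) (by linarith : (0:ℝ) ≤ -c - ε),
    mul_nonneg hx0.le (by linarith : (0:ℝ) ≤ -c^3 * (c + 2) - ε)]

theorem stmt_4 (δ : ℝ) (hδ : 0 < δ) :
    ∃ n₁ : ℕ, 3 ≤ n₁ ∧ ∀ n : ℕ, n₁ ≤ n → Kset n ⊆ Set.Ioo (-2 : ℝ) (-2 + δ) := by
  set ε : ℝ := min 1 δ with hεdef
  have hε : 0 < ε := lt_min one_pos hδ
  have hε1 : ε ≤ 1 := min_le_left _ _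
  have hεδ : ε ≤ δ := min_le_right _ _
  obtain ⟨m, hm⟩ : ∃ m : ℕ, m = (⌈2 / ε⌉).toNat := ⟨_, rfl⟩
  refine ⟨m + 4, by omega, fun n hn c hc => ?_⟩
  obtain ⟨hc0, h1, h2⟩ := hc
  have hn3 : 3 ≤ n := by omega
  -- c < -1
  have hx1 : 0 < (fc c)^[1] c := h1 1 le_rfl (by omega)
  have hx1' : (fc c)^[1] c = c ^ 2 + c := by simp [fc]
  have hcm1 : c < -1 := by
    rw [hx1'] at hx1
    nlinarith
  -- c > -2
  have hcgt : -2 < c := by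
    by_contra hcon
    push_neg at hcon
    have := escape c hcon (n + 3 * 0 + 1) (by omega)
    have hneg := (h2 0).1
    linarith
  -- c < -2 + δ
  have hclt : c < -2 + ε := by
    by_contra hcon
    push_neg at hcon
    have key : ∀ j : ℕ, j + 1 ≤ n - 1 →
        (fc c)^[j + 1] c ≤ (c ^ 2 + c) - j * ε := by
      intro j
      induction j with
      | zero => intro _; rw [hx1']; simp
      | succ j ih =>
        intro hj
        have hj' : j + 1 ≤ n - 1 := by omega
        have ihx := ih hj'
        have hpos : 0 < (fc c)^[j + 1] c := h1 (j + 1) (by omega) hj'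
        have hle : (fc c)^[j + 1] c ≤ c ^ 2 + c := by
          have : (0:ℝ) ≤ (j : ℝ) * ε := by positivity
          linarith
        have hstep := step_dec c ((fc c)^[j + 1] c) ε hε hε1 hcon hcm1.le hpos hle
        rw [Function.iterate_succ_apply']
        show ((fc c)^[j + 1] c) ^ 2 + c ≤ _
        push_cast
        linarith
    have hkey := key (n - 2) (by omega)
    have hpos := h1 (n - 2 + 1) (by omega) (by omega)
    -- (n-2) * ε ≥ 2
    have hceil : (2 : ℝ) / ε ≤ ((n - 2 : ℕ) : ℝ) := by
      have hmn : m ≤ n - 2 := by omega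
      have h1' : ((m : ℕ) : ℝ) ≤ ((n - 2 : ℕ) : ℝ) := Nat.cast_le.mpr hmn
      have h2' : (2 : ℝ) / ε ≤ (m : ℝ) := by
        rw [hm]
        have := Int.le_ceil (2 / ε)
        have h3' : (⌈2 / ε⌉ : ℝ) ≤ (⌈2 / ε⌉.toNat : ℝ) := by
          exact_mod_cast Int.self_le_toNat _
        linarith
      linarith
    have h2le : (2 : ℝ) ≤ ((n - 2 : ℕ) : ℝ) * ε := by
      rw [div_le_iff₀ hε] at hceil
      linarith
    have hcc : c ^ 2 + c ≤ 2 := by nlinarith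
    linarith
  exact ⟨hcgt, by linarith⟩
end

section
/- Let p, p̃ : ℝ → ℝ be functions differentiable at c = −2 such that for all c in some neighborhood of −2 one has f_c³(p(c)) = p(c) and f_c³(p̃(c)) = p̃(c), and such that p(−2) = 2 cos(4π/7) and p̃(−2) = 2 cos(4π/9). Then the functions c ↦ |M(c, p(c))| and c ↦ |M(c, p̃(c))| are differentiable at −2, and the derivative of c ↦ |M(c, p(c))| at −2 is strictly larger than the derivative of c ↦ |M(c, p̃(c))| at −2, where M(c, x) := 8 x (x² + c) ((x² + c)² + c) is the derivative of the third iterate f_c³ at x. -/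
/-!
Differentiating the fixed-point equation `f_c³(p c) = p c` gives `p' = ∂_c f_c³ + M · p'`, so the
derivative of a period-3 branch, and hence of its multiplier `M(c, p c)`, is determined by the
point `p(-2)` alone. At `c = -2` the substitution `x = 2 cos θ` conjugates `f_{-2}` to angle
doubling, so `2 cos (4π/7)` and `2 cos (4π/9)` are roots of `x³ + x² - 2x - 1` and `x³ - 3x + 1`,
with multipliers `8` and `-8`. Reducing modulo these cubics, `d/dc M(c, p c) = -16` and
`d/dc M(c, p̃ c) = 24` at `-2`, so the derivatives of the absolute values are `-16 > -24`.
-/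

open Real Filter

/-- The derivative of the third iterate `f_c³` at `x`. -/
def M (c x : ℝ) : ℝ := 8 * x * (x ^ 2 + c) * ((x ^ 2 + c) ^ 2 + c)

-- The partial derivatives `∂_c f_c³(x)`, `∂_c M(c, x)` and `∂_x M(c, x)`.
def fcIterThreeDerivC (c x : ℝ) : ℝ := 2 * ((x ^ 2 + c) ^ 2 + c) * (2 * (x ^ 2 + c) + 1) + 1

def MDerivC (c x : ℝ) : ℝ := 8 * x * ((x ^ 2 + c) ^ 2 + c + (x ^ 2 + c) * (2 * (x ^ 2 + c) + 1))

def MDerivX (c x : ℝ) : ℝ :=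
  8 * ((x ^ 2 + c) * ((x ^ 2 + c) ^ 2 + c) + 2 * x ^ 2 * ((x ^ 2 + c) ^ 2 + c)
    + 4 * x ^ 2 * (x ^ 2 + c) ^ 2)

theorem two_cos_three_mul (θ : ℝ) : 2 * cos (3 * θ) = (2 * cos θ) ^ 3 - 3 * (2 * cos θ) := by
  rw [cos_three_mul]; ring

theorem two_cos_four_mul (θ : ℝ) :
    2 * cos (4 * θ) = (2 * cos θ) ^ 4 - 4 * (2 * cos θ) ^ 2 + 2 := by
  rw [show 4 * θ = 2 * (2 * θ) by ring, cos_two_mul, cos_two_mul]; ring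

theorem two_cos_four_pi_div_seven_cubic :
    (2 * cos (4 * π / 7)) ^ 3 + (2 * cos (4 * π / 7)) ^ 2 - 2 * (2 * cos (4 * π / 7)) - 1 = 0 := by
  set x := 2 * cos (4 * π / 7)
  -- `4 · (4π/7)` and `3 · (4π/7)` are `± 2π/7` modulo `2π`; `T₄ - T₃` has the root `2` besides.
  have h : 2 * cos (4 * (4 * π / 7)) = 2 * cos (3 * (4 * π / 7)) := by
    rw [show 4 * (4 * π / 7) = 2 * π / 7 + 2 * π by ring,
      show 3 * (4 * π / 7) = 2 * π - 2 * π / 7 by ring, cos_add_two_pi, cos_two_pi_sub]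
  rw [two_cos_four_mul, two_cos_three_mul] at h
  have hx : x - 2 ≠ 0 := by
    have : cos (4 * π / 7) ≤ 0 := cos_nonpos_of_pi_div_two_le_of_le (by linarith [pi_pos])
      (by linarith [pi_pos])
    linarith
  refine (mul_eq_zero.mp ?_).resolve_left hx
  linear_combination h

theorem two_cos_four_pi_div_nine_cubic :
    (2 * cos (4 * π / 9)) ^ 3 - 3 * (2 * cos (4 * π / 9)) + 1 = 0 := by
  have h := two_cos_three_mul (4 * π / 9)
  rw [show 3 * (4 * π / 9) = π / 3 + π by ring, cos_add_pi, cos_pi_div_three] at h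
  linear_combination -h

-- The cofactors in the `linear_combination`s below are the quotients of division by the cubic.

theorem M_neg_two_of_cubic_seven {x : ℝ} (hx : x ^ 3 + x ^ 2 - 2 * x - 1 = 0) : M (-2) x = 8 := by
  unfold M
  linear_combination (8 + 16 * x - 24 * x ^ 2 - 8 * x ^ 3 + 8 * x ^ 4) * hx

theorem M_neg_two_of_cubic_nine {x : ℝ} (hx : x ^ 3 - 3 * x + 1 = 0) : M (-2) x = -8 := by
  unfold M
  linear_combination (8 - 8 * x - 24 * x ^ 2 + 8 * x ^ 4) * hx

theorem MDeriv_neg_two_of_cubic_seven {x d : ℝ} (hx : x ^ 3 + x ^ 2 - 2 * x - 1 = 0)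
    (hd : d = fcIterThreeDerivC (-2) x + M (-2) x * d) :
    MDerivC (-2) x + MDerivX (-2) x * d = -16 := by
  unfold MDerivC MDerivX
  unfold fcIterThreeDerivC M at hd
  linear_combination (16 / 7 + 40 / 7 * x - 24 / 7 * x ^ 2) * hd
    + (64 / 7 - 136 / 7 * x - 440 / 7 * x ^ 2 + 144 / 7 * x ^ 3 + 256 / 7 * x ^ 4 - 96 / 7 * x ^ 5
      + (240 / 7 + 72 / 7 * x - 328 / 7 * x ^ 2 - 1080 / 7 * x ^ 3 + 384 / 7 * x ^ 4
        + 512 / 7 * x ^ 5 - 192 / 7 * x ^ 6) * d) * hx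

theorem MDeriv_neg_two_of_cubic_nine {x d : ℝ} (hx : x ^ 3 - 3 * x + 1 = 0)
    (hd : d = fcIterThreeDerivC (-2) x + M (-2) x * d) :
    MDerivC (-2) x + MDerivX (-2) x * d = 24 := by
  unfold MDerivC MDerivX
  unfold fcIterThreeDerivC M at hd
  linear_combination (8 / 3 - 32 / 3 * x + 8 / 3 * x ^ 2) * hd
    + (-160 / 3 + 64 / 3 * x + 120 * x ^ 2 - 16 * x ^ 3 - 128 / 3 * x ^ 4 + 32 / 3 * x ^ 5
      + (-104 / 3 - 536 / 3 * x + 128 / 3 * x ^ 2 + 872 / 3 * x ^ 3 - 128 / 3 * x ^ 4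
        - 256 / 3 * x ^ 5 + 64 / 3 * x ^ 6) * d) * hx

theorem HasDerivAt.abs_of_pos {f : ℝ → ℝ} {f' x : ℝ} (hf : HasDerivAt f f' x) (hx : 0 < f x) :
    HasDerivAt (fun y => |f y|) f' x :=
  ((hasDerivAt_abs_pos hx).comp x hf).congr_deriv (one_mul f')

theorem HasDerivAt.abs_of_neg {f : ℝ → ℝ} {f' x : ℝ} (hf : HasDerivAt f f' x) (hx : f x < 0) :
    HasDerivAt (fun y => |f y|) (-f') x :=
  ((hasDerivAt_abs_neg hx).comp x hf).congr_deriv (neg_one_mul f')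

section Branch

variable {p : ℝ → ℝ} {d c₀ : ℝ}

theorem HasDerivAt.fc_comp (hp : HasDerivAt p d c₀) :
    HasDerivAt (fun c => fc c (p c)) (2 * p c₀ * d + 1) c₀ :=
  ((hp.fun_pow 2).fun_add (hasDerivAt_id' c₀)).congr_deriv (by norm_num)

theorem HasDerivAt.fc_iterate_three_comp (hp : HasDerivAt p d c₀) :
    HasDerivAt (fun c => (fc c)^[3] (p c)) (fcIterThreeDerivC c₀ (p c₀) + M c₀ (p c₀) * d) c₀ := by
  refine hp.fc_comp.fc_comp.fc_comp.congr_deriv ?_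
  simp only [fc, fcIterThreeDerivC, M]
  ring

theorem HasDerivAt.M_comp (hp : HasDerivAt p d c₀) :
    HasDerivAt (fun c => M c (p c)) (MDerivC c₀ (p c₀) + MDerivX c₀ (p c₀) * d) c₀ := by
  refine (((hp.const_mul 8).fun_mul hp.fc_comp).fun_mul hp.fc_comp.fc_comp).congr_deriv ?_
  simp only [fc, MDerivC, MDerivX]
  ring

theorem deriv_eq_of_eventually_fc_iterate_three_eq (hp : HasDerivAt p d c₀)
    (hfix : ∀ᶠ c in nhds c₀, (fc c)^[3] (p c) = p c) :
    d = fcIterThreeDerivC c₀ (p c₀) + M c₀ (p c₀) * d :=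
  hp.unique (hp.fc_iterate_three_comp.congr_of_eventuallyEq (hfix.mono fun _ h => h.symm))

theorem hasDerivAt_abs_M_of_cubic_seven (hp : HasDerivAt p d (-2))
    (hfix : ∀ᶠ c in nhds (-2 : ℝ), (fc c)^[3] (p c) = p c)
    (hx : p (-2) ^ 3 + p (-2) ^ 2 - 2 * p (-2) - 1 = 0) :
    HasDerivAt (fun c => |M c (p c)|) (-16) (-2) := by
  have hM := hp.M_comp
  rw [MDeriv_neg_two_of_cubic_seven hx (deriv_eq_of_eventually_fc_iterate_three_eq hp hfix)] at hM
  exact hM.abs_of_pos (by rw [M_neg_two_of_cubic_seven hx]; norm_num)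

theorem hasDerivAt_abs_M_of_cubic_nine (hp : HasDerivAt p d (-2))
    (hfix : ∀ᶠ c in nhds (-2 : ℝ), (fc c)^[3] (p c) = p c)
    (hx : p (-2) ^ 3 - 3 * p (-2) + 1 = 0) :
    HasDerivAt (fun c => |M c (p c)|) (-24) (-2) := by
  have hM := hp.M_comp
  rw [MDeriv_neg_two_of_cubic_nine hx (deriv_eq_of_eventually_fc_iterate_three_eq hp hfix)] at hM
  exact hM.abs_of_neg (by rw [M_neg_two_of_cubic_nine hx]; norm_num)

end Branch

theorem stmt_8 (p ptilde : ℝ → ℝ)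
    (hp : DifferentiableAt ℝ p (-2)) (hptilde : DifferentiableAt ℝ ptilde (-2))
    (hpfix : ∀ᶠ c in nhds (-2 : ℝ), (fc c)^[3] (p c) = p c)
    (hptildefix : ∀ᶠ c in nhds (-2 : ℝ), (fc c)^[3] (ptilde c) = ptilde c)
    (hpval : p (-2) = 2 * Real.cos (4 * π / 7))
    (hptildeval : ptilde (-2) = 2 * Real.cos (4 * π / 9)) :
    DifferentiableAt ℝ (fun c => |M c (p c)|) (-2) ∧
    DifferentiableAt ℝ (fun c => |M c (ptilde c)|) (-2) ∧
    deriv (fun c => |M c (ptilde c)|) (-2) < deriv (fun c => |M c (p c)|) (-2) := by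
  have h := hasDerivAt_abs_M_of_cubic_seven hp.hasDerivAt hpfix
    (hpval ▸ two_cos_four_pi_div_seven_cubic)
  have htilde := hasDerivAt_abs_M_of_cubic_nine hptilde.hasDerivAt hptildefix
    (hptildeval ▸ two_cos_four_pi_div_nine_cubic)
  refine ⟨h.differentiableAt, htilde.differentiableAt, ?_⟩
  rw [h.deriv, htilde.deriv]
  norm_num
end

section
/- Let c₀ ∈ ℝ and let π₀ : ℝ → ℝ be differentiable at c₀. Define π₁(c) := π₀(c)² + c and π₂(c) := π₁(c)² + c, and assume that π₂(c)² + c = π₀(c) for all c in some neighborhood of c₀ (i.e., (π₀(c), π₁(c), π₂(c)) is a cycle of f_c of length 3). If 8 π₀(c₀) π₁(c₀) π₂(c₀) ≠ 1, then π₀'(c₀) = −(1 + 2 π₂(c₀) + 4 π₁(c₀) π₂(c₀)) / (8 π₀(c₀) π₁(c₀) π₂(c₀) − 1). -/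
open Filter

theorem stmt_9 (c₀ : ℝ) (π₀ π₁ π₂ : ℝ → ℝ)
    (hdiff : DifferentiableAt ℝ π₀ c₀)
    (hπ₁ : ∀ c, π₁ c = (π₀ c) ^ 2 + c)
    (hπ₂ : ∀ c, π₂ c = (π₁ c) ^ 2 + c)
    (hcycle : ∀ᶠ c in nhds c₀, (π₂ c) ^ 2 + c = π₀ c)
    (hden : 8 * π₀ c₀ * π₁ c₀ * π₂ c₀ ≠ 1) :
    deriv π₀ c₀ =
      -(1 + 2 * π₂ c₀ + 4 * π₁ c₀ * π₂ c₀) / (8 * π₀ c₀ * π₁ c₀ * π₂ c₀ - 1) := by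
  have hd : HasDerivAt π₀ (deriv π₀ c₀) c₀ := hdiff.hasDerivAt
  have h1 : HasDerivAt (fun c => (π₀ c) ^ 2 + c)
      (2 * (π₀ c₀) ^ 1 * deriv π₀ c₀ + 1) c₀ := (hd.pow 2).add (hasDerivAt_id c₀)
  have h2 : HasDerivAt (fun c => ((π₀ c) ^ 2 + c) ^ 2 + c)
      (2 * ((π₀ c₀) ^ 2 + c₀) ^ 1 * (2 * (π₀ c₀) ^ 1 * deriv π₀ c₀ + 1) + 1) c₀ :=
    (h1.pow 2).add (hasDerivAt_id c₀)
  have h3 : HasDerivAt (fun c => (((π₀ c) ^ 2 + c) ^ 2 + c) ^ 2 + c)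
      (2 * (((π₀ c₀) ^ 2 + c₀) ^ 2 + c₀) ^ 1 *
        (2 * ((π₀ c₀) ^ 2 + c₀) ^ 1 * (2 * (π₀ c₀) ^ 1 * deriv π₀ c₀ + 1) + 1) + 1) c₀ :=
    (h2.pow 2).add (hasDerivAt_id c₀)
  have heq : (fun c => (((π₀ c) ^ 2 + c) ^ 2 + c) ^ 2 + c) =ᶠ[nhds c₀] π₀ := by
    filter_upwards [hcycle] with c hc
    rw [hπ₂ c, hπ₁ c] at hc
    exact hc
  have h4 : HasDerivAt π₀
      (2 * (((π₀ c₀) ^ 2 + c₀) ^ 2 + c₀) ^ 1 *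
        (2 * ((π₀ c₀) ^ 2 + c₀) ^ 1 * (2 * (π₀ c₀) ^ 1 * deriv π₀ c₀ + 1) + 1) + 1) c₀ :=
    h3.congr_of_eventuallyEq heq.symm
  have hD := h4.deriv
  have hb : π₁ c₀ = (π₀ c₀) ^ 2 + c₀ := hπ₁ c₀
  have he : π₂ c₀ = ((π₀ c₀) ^ 2 + c₀) ^ 2 + c₀ := by rw [hπ₂ c₀, hb]
  rw [hb, he] at hden ⊢
  have hne : 8 * π₀ c₀ * ((π₀ c₀) ^ 2 + c₀) * (((π₀ c₀) ^ 2 + c₀) ^ 2 + c₀) - 1 ≠ 0 :=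
    sub_ne_zero.mpr hden
  rw [eq_div_iff hne]
  linear_combination -hD
end

section
/- Let f : ℂ → ℂ be the quadratic polynomial f(z) = z² − 2. Then the set of complex numbers z satisfying f³(z) = z and f(z) ≠ z (i.e., the periodic points of f of minimal period 3) is exactly the six-element set { 2 cos(2π/7), 2 cos(4π/7), 2 cos(6π/7), 2 cos(2π/9), 2 cos(4π/9), 2 cos(8π/9) } (real numbers regarded as complex numbers). -/
open Real

/-- If `exp(x*I)^(a+b) = 1` then `2 cos (a*x) = exp(x*I)^a + exp(x*I)^b`. -/
lemma rep_aux (x : ℝ) (a b : ℕ)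
    (h : Complex.exp ((x : ℂ) * Complex.I) ^ (a + b) = 1) :
    ((2 * Real.cos (a * x) : ℝ) : ℂ) =
      Complex.exp ((x : ℂ) * Complex.I) ^ a + Complex.exp ((x : ℂ) * Complex.I) ^ b := by
  have hw : ∀ m : ℕ, Complex.exp ((x : ℂ) * Complex.I) ^ m
      = Complex.exp (((m * x : ℝ) : ℂ) * Complex.I) := by
    intro m
    rw [← Complex.exp_nat_mul]
    push_cast
    ring_nf
  have hb : Complex.exp (((b * x : ℝ) : ℂ) * Complex.I)
      = Complex.exp (-(((a * x : ℝ) : ℂ) * Complex.I)) := by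
    rw [Complex.exp_neg]
    refine eq_inv_of_mul_eq_one_left ?_
    rw [← hw b, ← hw a, ← pow_add, add_comm b a]
    exact h
  rw [hw a, hw b, hb]
  have h2c : ((2 * Real.cos (a * x) : ℝ) : ℂ) = 2 * Complex.cos (((a * x : ℝ)) : ℂ) := by
    push_cast; ring
  rw [h2c, Complex.two_cos, neg_mul]

theorem stmt_12 (f : ℂ → ℂ) (hf : ∀ z, f z = z ^ 2 - 2) :
    {z : ℂ | f^[3] z = z ∧ f z ≠ z} =
      ({((2 * Real.cos (2 * π / 7) : ℝ) : ℂ), ((2 * Real.cos (4 * π / 7) : ℝ) : ℂ),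
        ((2 * Real.cos (6 * π / 7) : ℝ) : ℂ), ((2 * Real.cos (2 * π / 9) : ℝ) : ℂ),
        ((2 * Real.cos (4 * π / 9) : ℝ) : ℂ), ((2 * Real.cos (8 * π / 9) : ℝ) : ℂ)} :
        Set ℂ) := by
  -- the two primitive roots of unity
  set w : ℂ := Complex.exp (((2 * π / 7 : ℝ) : ℂ) * Complex.I) with hw
  set u : ℂ := Complex.exp (((2 * π / 9 : ℝ) : ℂ) * Complex.I) with hu
  have hw7 : w ^ 7 = 1 := by
    rw [hw, ← Complex.exp_nat_mul,
      show ((7 : ℕ) : ℂ) * (((2 * π / 7 : ℝ) : ℂ) * Complex.I) = 2 * (π : ℂ) * Complex.I by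
        push_cast; ring]
    exact Complex.exp_two_pi_mul_I
  have hu9 : u ^ 9 = 1 := by
    rw [hu, ← Complex.exp_nat_mul,
      show ((9 : ℕ) : ℂ) * (((2 * π / 9 : ℝ) : ℂ) * Complex.I) = 2 * (π : ℂ) * Complex.I by
        push_cast; ring]
    exact Complex.exp_two_pi_mul_I
  have hwne : w ≠ 1 := by
    intro h
    have him := congrArg Complex.im h
    rw [hw, Complex.exp_ofReal_mul_I_im, Complex.one_im] at him
    have : Real.sin (2 * π / 7) > 0 := by
      apply Real.sin_pos_of_pos_of_lt_pi
      · positivity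
      · nlinarith [Real.pi_pos]
    linarith
  have hu3ne : u ^ 3 ≠ 1 := by
    have hu3 : u ^ 3 = Complex.exp (((2 * π / 3 : ℝ) : ℂ) * Complex.I) := by
      rw [hu, ← Complex.exp_nat_mul]
      congr 1
      push_cast; ring
    intro h
    have him := congrArg Complex.im h
    rw [hu3, Complex.exp_ofReal_mul_I_im, Complex.one_im] at him
    have : Real.sin (2 * π / 3) > 0 := by
      apply Real.sin_pos_of_pos_of_lt_pi
      · positivity
      · nlinarith [Real.pi_pos]
    linarith
  have hS7 : 1 + w + w ^ 2 + w ^ 3 + w ^ 4 + w ^ 5 + w ^ 6 = 0 := by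
    have : (w - 1) * (1 + w + w ^ 2 + w ^ 3 + w ^ 4 + w ^ 5 + w ^ 6) = 0 := by
      linear_combination hw7
    rcases mul_eq_zero.1 this with h | h
    · exact absurd (sub_eq_zero.1 h) hwne
    · exact h
  have hS9 : 1 + u ^ 3 + u ^ 6 = 0 := by
    have : (u ^ 3 - 1) * (1 + u ^ 3 + u ^ 6) = 0 := by
      linear_combination hu9
    rcases mul_eq_zero.1 this with h | h
    · exact absurd (sub_eq_zero.1 h) hu3ne
    · exact h
  -- factorization of the two cubics
  have fact7 : ∀ z : ℂ, z ^ 3 + z ^ 2 - 2 * z - 1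
      = (z - (w + w ^ 6)) * (z - (w ^ 2 + w ^ 5)) * (z - (w ^ 3 + w ^ 4)) := by
    have h1 : (w + w ^ 6) + (w ^ 2 + w ^ 5) + (w ^ 3 + w ^ 4) = -1 := by
      linear_combination hS7
    have h2 : (w + w ^ 6) * (w ^ 2 + w ^ 5) + (w + w ^ 6) * (w ^ 3 + w ^ 4)
        + (w ^ 2 + w ^ 5) * (w ^ 3 + w ^ 4) = -2 := by
      linear_combination 2 * hS7 + (2 * w + 2 * w ^ 2 + w ^ 3 + w ^ 4) * hw7
    have h3 : (w + w ^ 6) * (w ^ 2 + w ^ 5) * (w ^ 3 + w ^ 4) = 1 := by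
      linear_combination hS7 + (2 + w + w ^ 2 + w ^ 3 + w ^ 4 + w ^ 5 + w ^ 7 + w ^ 8) * hw7
    intro z
    linear_combination z ^ 2 * h1 - z * h2 + h3
  have fact9 : ∀ z : ℂ, z ^ 3 - 3 * z + 1
      = (z - (u + u ^ 8)) * (z - (u ^ 2 + u ^ 7)) * (z - (u ^ 4 + u ^ 5)) := by
    have h1 : (u + u ^ 8) + (u ^ 2 + u ^ 7) + (u ^ 4 + u ^ 5) = 0 := by
      linear_combination (u + u ^ 2) * hS9
    have h2 : (u + u ^ 8) * (u ^ 2 + u ^ 7) + (u + u ^ 8) * (u ^ 4 + u ^ 5)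
        + (u ^ 2 + u ^ 7) * (u ^ 4 + u ^ 5) = -3 := by
      linear_combination (3 + u + u ^ 2) * hS9 + (u + u ^ 2 + 2 * u ^ 3 + u ^ 4 + u ^ 6) * hu9
    have h3 : (u + u ^ 8) * (u ^ 2 + u ^ 7) * (u ^ 4 + u ^ 5) = -1 := by
      linear_combination (1 + u + u ^ 2) * hS9
        + (u + u ^ 2 + u ^ 3 + u ^ 4 + u ^ 5 + u ^ 6 + u ^ 10 + u ^ 11) * hu9
    intro z
    linear_combination z ^ 2 * h1 - z * h2 + h3
  -- identification of the six constants
  have hr1 : ((2 * Real.cos (2 * π / 7) : ℝ) : ℂ) = w + w ^ 6 := by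
    have := rep_aux (2 * π / 7) 1 6 (by rw [← hw]; exact hw7)
    rw [← hw] at this
    simpa using this
  have hr2 : ((2 * Real.cos (4 * π / 7) : ℝ) : ℂ) = w ^ 2 + w ^ 5 := by
    have := rep_aux (2 * π / 7) 2 5 (by rw [← hw]; exact hw7)
    rw [← hw, show (2 : ℕ) * (2 * π / 7) = 4 * π / 7 by push_cast; ring] at this
    exact this
  have hr3 : ((2 * Real.cos (6 * π / 7) : ℝ) : ℂ) = w ^ 3 + w ^ 4 := by
    have := rep_aux (2 * π / 7) 3 4 (by rw [← hw]; exact hw7)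
    rw [← hw, show (3 : ℕ) * (2 * π / 7) = 6 * π / 7 by push_cast; ring] at this
    exact this
  have hr4 : ((2 * Real.cos (2 * π / 9) : ℝ) : ℂ) = u + u ^ 8 := by
    have := rep_aux (2 * π / 9) 1 8 (by rw [← hu]; exact hu9)
    rw [← hu] at this
    simpa using this
  have hr5 : ((2 * Real.cos (4 * π / 9) : ℝ) : ℂ) = u ^ 2 + u ^ 7 := by
    have := rep_aux (2 * π / 9) 2 7 (by rw [← hu]; exact hu9)
    rw [← hu, show (2 : ℕ) * (2 * π / 9) = 4 * π / 9 by push_cast; ring] at this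
    exact this
  have hr6 : ((2 * Real.cos (8 * π / 9) : ℝ) : ℂ) = u ^ 4 + u ^ 5 := by
    have := rep_aux (2 * π / 9) 4 5 (by rw [← hu]; exact hu9)
    rw [← hu, show (4 : ℕ) * (2 * π / 9) = 8 * π / 9 by push_cast; ring] at this
    exact this
  have hit : ∀ z : ℂ, f^[3] z = ((z ^ 2 - 2) ^ 2 - 2) ^ 2 - 2 := by
    intro z
    show f (f (f z)) = _
    rw [hf, hf, hf]
  ext z
  simp only [Set.mem_setOf_eq, Set.mem_insert_iff, Set.mem_singleton_iff]
  rw [hr1, hr2, hr3, hr4, hr5, hr6]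
  constructor
  · rintro ⟨h1, h2⟩
    rw [hit] at h1
    have hne : z ^ 2 - z - 2 ≠ 0 := by
      intro h
      apply h2
      rw [hf]
      linear_combination h
    have hprod : (z ^ 2 - z - 2) *
        ((z ^ 3 + z ^ 2 - 2 * z - 1) * (z ^ 3 - 3 * z + 1)) = 0 := by
      linear_combination h1
    have h6 : (z ^ 3 + z ^ 2 - 2 * z - 1) * (z ^ 3 - 3 * z + 1) = 0 :=
      (mul_eq_zero.1 hprod).resolve_left hne
    rw [fact7, fact9] at h6
    rcases mul_eq_zero.1 h6 with h | h
    · rcases mul_eq_zero.1 h with h' | h'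
      · rcases mul_eq_zero.1 h' with h'' | h''
        · exact Or.inl (sub_eq_zero.1 h'')
        · exact Or.inr (Or.inl (sub_eq_zero.1 h''))
      · exact Or.inr (Or.inr (Or.inl (sub_eq_zero.1 h')))
    · rcases mul_eq_zero.1 h with h' | h'
      · rcases mul_eq_zero.1 h' with h'' | h''
        · exact Or.inr (Or.inr (Or.inr (Or.inl (sub_eq_zero.1 h''))))
        · exact Or.inr (Or.inr (Or.inr (Or.inr (Or.inl (sub_eq_zero.1 h'')))))
      · exact Or.inr (Or.inr (Or.inr (Or.inr (Or.inr (sub_eq_zero.1 h')))))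
  · intro h
    have key7 : ∀ v : ℂ, v ^ 3 + v ^ 2 - 2 * v - 1 = 0 → f^[3] v = v ∧ f v ≠ v := by
      intro v hv
      constructor
      · rw [hit]
        linear_combination (v ^ 2 - v - 2) * (v ^ 3 - 3 * v + 1) * hv
      · rw [hf]
        intro heq
        have hA : v ^ 2 - v - 2 = 0 := by linear_combination heq
        have : (1 : ℂ) = 0 := by
          linear_combination ((4/7 : ℂ) * (1 + (v / 2 - 5/4) * (v + 2))) * hA
            - ((4/7 : ℂ) * (v / 2 - 5/4)) * hv
        exact one_ne_zero this
    have key9 : ∀ v : ℂ, v ^ 3 - 3 * v + 1 = 0 → f^[3] v = v ∧ f v ≠ v := by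
      intro v hv
      constructor
      · rw [hit]
        linear_combination (v ^ 2 - v - 2) * (v ^ 3 + v ^ 2 - 2 * v - 1) * hv
      · rw [hf]
        intro heq
        have hA : v ^ 2 - v - 2 = 0 := by linear_combination heq
        have : (1 : ℂ) = 0 := by
          linear_combination (1/3 : ℂ) * hv - ((v + 1) / 3) * hA
        exact one_ne_zero this
    rcases h with h | h | h | h | h | h
    · exact h ▸ key7 _ (by rw [fact7]; ring)
    · exact h ▸ key7 _ (by rw [fact7]; ring)
    · exact h ▸ key7 _ (by rw [fact7]; ring)
    · exact h ▸ key9 _ (by rw [fact9]; ring)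
    · exact h ▸ key9 _ (by rw [fact9]; ring)
    · exact h ▸ key9 _ (by rw [fact9]; ring)
end
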